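/- arXiv:2001.05128 — 10 statements merged into one kernel-verified Lean document; each statement's English description precedes it below -/
import Mathlib

section
/- Let H, H₀ be Hilbert spaces and (Ω, μ) a measure space. Suppose {A_α} and {Ψ_α} are families in B(H, H₀) such that α ↦ A_α h and α ↦ Ψ_α h are measurable for every h ∈ H, and there exist b, d > 0 with ∫ ‖A_α h‖² dμ ≤ b‖h‖² and ∫ ‖Ψ_α h‖² dμ ≤ d‖h‖² for all h ∈ H. Then for every h, g ∈ H, |∫ ⟨A_α h, Ψ_α g⟩ dμ(α)| ≤ √(bd) ‖h‖ ‖g‖, and consequently there is a bounded linear operator S_{A,Ψ} : H → H with ‖S_{A,Ψ}‖ ≤ √(bd) satisfying ⟨S_{A,Ψ} h, g⟩ = ∫ ⟨A_α h, Ψ_α g⟩ dμ(α) for all h, g ∈ H. -/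
/-! The maps `h ↦ (α ↦ A α h)` and `h ↦ (α ↦ Ψ α h)` are bounded operators `T_A`, `T_Ψ` from `H`
into `L²(μ, H₀)` of norms at most `√b` and `√d`, and `∫ ⟪A α h, Ψ α g⟫ ∂μ` is the `L²` inner
product `⟪T_A h, T_Ψ g⟫`. So `S = T_Ψ† T_A` is the operator, with `‖S‖ ≤ ‖T_Ψ‖ ‖T_A‖ ≤ √(bd)`, and
the scalar bound is `‖⟪S h, g⟫‖ ≤ ‖S‖ ‖h‖ ‖g‖`. -/
open MeasureTheory

variable {𝕜 : Type*} [RCLike 𝕜]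

local notation "⟪" x ", " y "⟫" => @inner 𝕜 _ _ x y

namespace MeasureTheory

theorem MemLp.norm_toLp_sq {Ω E : Type*} [MeasurableSpace Ω] {μ : Measure Ω}
    [NormedAddCommGroup E] {f : Ω → E} (hf : MemLp f 2 μ) :
    ‖hf.toLp f‖ ^ 2 = ∫ α, ‖f α‖ ^ 2 ∂μ := by
  rw [Lp.norm_toLp, toReal_eLpNorm hf.1,
    lpNorm_eq_integral_norm_rpow_toReal two_ne_zero ENNReal.ofNat_ne_top hf.1]
  simp only [ENNReal.toReal_ofNat, Real.rpow_two]
  rw [← Real.rpow_natCast, ← Real.rpow_mul (integral_nonneg fun _ => by positivity)]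
  norm_num

section familyToLp

variable {Ω H E : Type*} [MeasurableSpace Ω] (μ : Measure Ω)
  [NormedAddCommGroup H] [NormedSpace 𝕜 H] [NormedAddCommGroup E]

noncomputable def familyToLp [NormedSpace 𝕜 E] (p : ENNReal) (A : Ω → H →L[𝕜] E)
    (hA : ∀ h, MemLp (fun α => A α h) p μ) : H →ₗ[𝕜] Lp E p μ where
  toFun h := (hA h).toLp _
  map_add' h h' := by
    rw [← MemLp.toLp_add]
    exact MemLp.toLp_congr _ _ (.of_forall fun α => map_add (A α) h h')
  map_smul' c h := by
    rw [RingHom.id_apply, ← MemLp.toLp_const_smul]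
    exact MemLp.toLp_congr _ _ (.of_forall fun α => map_smul (A α) c h)

variable {μ}

@[simp]
theorem familyToLp_apply [NormedSpace 𝕜 E] {p : ENNReal} {A : Ω → H →L[𝕜] E}
    (hA : ∀ h, MemLp (fun α => A α h) p μ) (h : H) :
    familyToLp μ p A hA h = (hA h).toLp _ :=
  rfl

theorem norm_familyToLp_two_le [NormedSpace 𝕜 E] {A : Ω → H →L[𝕜] E}
    (hA : ∀ h, MemLp (fun α => A α h) 2 μ) {C : ℝ}
    (hAC : ∀ h, ∫ α, ‖A α h‖ ^ 2 ∂μ ≤ C * ‖h‖ ^ 2) (h : H) :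
    ‖familyToLp μ 2 A hA h‖ ≤ Real.sqrt C * ‖h‖ := by
  rw [← Real.sqrt_sq (norm_nonneg h), ← Real.sqrt_mul' _ (sq_nonneg _)]
  refine Real.le_sqrt_of_sq_le ?_
  rw [familyToLp_apply, (hA h).norm_toLp_sq]
  exact hAC h

theorem inner_familyToLp_two [InnerProductSpace 𝕜 E] {A Ψ : Ω → H →L[𝕜] E}
    (hA : ∀ h, MemLp (fun α => A α h) 2 μ) (hΨ : ∀ h, MemLp (fun α => Ψ α h) 2 μ) (h g : H) :
    ⟪familyToLp μ 2 A hA h, familyToLp μ 2 Ψ hΨ g⟫ = ∫ α, ⟪A α h, Ψ α g⟫ ∂μ := by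
  rw [L2.inner_def]
  refine integral_congr_ae ?_
  filter_upwards [(hA h).coeFn_toLp, (hΨ g).coeFn_toLp] with α hAα hΨα
  rw [familyToLp_apply, familyToLp_apply, hAα, hΨα]

end familyToLp

open ContinuousLinearMap in
theorem exists_clm_inner_eq_integral_inner {Ω H E : Type*} [MeasurableSpace Ω] {μ : Measure Ω}
    [NormedAddCommGroup H] [InnerProductSpace 𝕜 H] [CompleteSpace H]
    [NormedAddCommGroup E] [InnerProductSpace 𝕜 E] [CompleteSpace E] {A Ψ : Ω → H →L[𝕜] E}
    (hA : ∀ h, MemLp (fun α => A α h) 2 μ) (hΨ : ∀ h, MemLp (fun α => Ψ α h) 2 μ) {b d : ℝ}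
    (hAb : ∀ h, ∫ α, ‖A α h‖ ^ 2 ∂μ ≤ b * ‖h‖ ^ 2)
    (hΨd : ∀ h, ∫ α, ‖Ψ α h‖ ^ 2 ∂μ ≤ d * ‖h‖ ^ 2) :
    ∃ S : H →L[𝕜] H, ‖S‖ ≤ Real.sqrt b * Real.sqrt d ∧
      ∀ h g, ⟪S h, g⟫ = ∫ α, ⟪A α h, Ψ α g⟫ ∂μ := by
  set TA := (familyToLp μ 2 A hA).mkContinuous _ (norm_familyToLp_two_le hA hAb)
  set TΨ := (familyToLp μ 2 Ψ hΨ).mkContinuous _ (norm_familyToLp_two_le hΨ hΨd)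
  refine ⟨adjoint TΨ ∘L TA, ?_, fun h g => ?_⟩
  · calc ‖adjoint TΨ ∘L TA‖ ≤ ‖adjoint TΨ‖ * ‖TA‖ := opNorm_comp_le _ _
      _ = ‖TA‖ * ‖TΨ‖ := by rw [LinearIsometryEquiv.norm_map, mul_comm]
      _ ≤ Real.sqrt b * Real.sqrt d := by
        gcongr <;> exact LinearMap.mkContinuous_norm_le _ (Real.sqrt_nonneg _) _
  · rw [comp_apply, adjoint_inner_left, LinearMap.mkContinuous_apply,
      LinearMap.mkContinuous_apply, inner_familyToLp_two]

end MeasureTheory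

theorem extension_stmt0_general
    {H H₀ : Type*} [NormedAddCommGroup H] [InnerProductSpace 𝕜 H] [CompleteSpace H]
    [NormedAddCommGroup H₀] [InnerProductSpace 𝕜 H₀] [CompleteSpace H₀]
    {Ω : Type*} [MeasurableSpace Ω] (μ : Measure Ω)
    (A Ψ : Ω → H →L[𝕜] H₀)
    (hAm : ∀ h : H, AEStronglyMeasurable (fun α => A α h) μ)
    (hΨm : ∀ h : H, AEStronglyMeasurable (fun α => Ψ α h) μ)
    (b d : ℝ) (hb : 0 < b)
    (hAi : ∀ h : H, Integrable (fun α => ‖A α h‖ ^ 2) μ)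
    (hΨi : ∀ h : H, Integrable (fun α => ‖Ψ α h‖ ^ 2) μ)
    (hA : ∀ h : H, ∫ α, ‖A α h‖ ^ 2 ∂μ ≤ b * ‖h‖ ^ 2)
    (hΨ : ∀ h : H, ∫ α, ‖Ψ α h‖ ^ 2 ∂μ ≤ d * ‖h‖ ^ 2) :
    (∀ h g : H, ‖∫ α, ⟪A α h, Ψ α g⟫ ∂μ‖ ≤ Real.sqrt (b * d) * ‖h‖ * ‖g‖) ∧
    ∃ S : H →L[𝕜] H, ‖S‖ ≤ Real.sqrt (b * d) ∧
      ∀ h g : H, ⟪S h, g⟫ = ∫ α, ⟪A α h, Ψ α g⟫ ∂μ := by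
  obtain ⟨S, hS, hS_inner⟩ := exists_clm_inner_eq_integral_inner
    (fun h => (memLp_two_iff_integrable_sq_norm (hAm h)).2 (hAi h))
    (fun h => (memLp_two_iff_integrable_sq_norm (hΨm h)).2 (hΨi h)) hA hΨ
  rw [← Real.sqrt_mul hb.le] at hS
  refine ⟨fun h g => ?_, S, hS, hS_inner⟩
  rw [← hS_inner]
  calc ‖⟪S h, g⟫‖ ≤ ‖S h‖ * ‖g‖ := norm_inner_le_norm _ _
    _ ≤ ‖S‖ * ‖h‖ * ‖g‖ := by gcongr; exact S.le_opNorm h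
    _ ≤ Real.sqrt (b * d) * ‖h‖ * ‖g‖ := by gcongr

/-- Cauchy–Schwarz bound for the weak frame integral and existence of the
bounded frame operator `S_{A,Ψ}` with `‖S_{A,Ψ}‖ ≤ √(bd)`. -/
theorem extension_stmt0
    {H H₀ : Type*} [NormedAddCommGroup H] [InnerProductSpace 𝕜 H] [CompleteSpace H]
    [NormedAddCommGroup H₀] [InnerProductSpace 𝕜 H₀] [CompleteSpace H₀]
    {Ω : Type*} [MeasurableSpace Ω] (μ : Measure Ω)
    (A Ψ : Ω → H →L[𝕜] H₀)
    (hAm : ∀ h : H, AEStronglyMeasurable (fun α => A α h) μ)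
    (hΨm : ∀ h : H, AEStronglyMeasurable (fun α => Ψ α h) μ)
    (b d : ℝ) (hb : 0 < b) (hd : 0 < d)
    (hAi : ∀ h : H, Integrable (fun α => ‖A α h‖ ^ 2) μ)
    (hΨi : ∀ h : H, Integrable (fun α => ‖Ψ α h‖ ^ 2) μ)
    (hA : ∀ h : H, ∫ α, ‖A α h‖ ^ 2 ∂μ ≤ b * ‖h‖ ^ 2)
    (hΨ : ∀ h : H, ∫ α, ‖Ψ α h‖ ^ 2 ∂μ ≤ d * ‖h‖ ^ 2) :
    (∀ h g : H, ‖∫ α, ⟪A α h, Ψ α g⟫ ∂μ‖ ≤ Real.sqrt (b * d) * ‖h‖ * ‖g‖) ∧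
    ∃ S : H →L[𝕜] H, ‖S‖ ≤ Real.sqrt (b * d) ∧
      ∀ h g : H, ⟪S h, g⟫ = ∫ α, ⟪A α h, Ψ α g⟫ ∂μ :=
  extension_stmt0_general μ A Ψ hAm hΨm b d hb hAi hΨi hA hΨ
end

section
/- Let ({A_α}, {Ψ_α}) be a continuous operator-valued frame in B(H, H₀). The set of all bounded left-inverses of θ_A : H → L²(Ω, H₀) is exactly { S_{A,Ψ}^{-1} θ_Ψ* + U (I - θ_A S_{A,Ψ}^{-1} θ_Ψ*) : U ∈ B(L²(Ω, H₀), H) }. -/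
open MeasureTheory ContinuousLinearMap

variable {𝕜 : Type*} [RCLike 𝕜]

namespace ContinuousLinearMap

variable {R E F : Type*} [Ring R]
  [TopologicalSpace E] [AddCommGroup E] [Module R E] [IsTopologicalAddGroup E]
  [TopologicalSpace F] [AddCommGroup F] [Module R F] [IsTopologicalAddGroup F]

/-- `1 - T P` vanishes on `range T`, so adding `U (1 - T P)` to `P` keeps it a left inverse;
conversely a left inverse `L` is recovered with `U = L`. -/
theorem comp_eq_id_iff_exists_eq_add_comp_sub {T : E →L[R] F} {P : F →L[R] E}
    (hP : P.comp T = .id R E) (L : F →L[R] E) :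
    L.comp T = .id R E ↔ ∃ U : F →L[R] E, L = P + U.comp (.id R F - T.comp P) := by
  constructor
  · intro hL
    refine ⟨L, ?_⟩
    rw [comp_sub, comp_id, ← comp_assoc, hL, id_comp, add_sub_cancel]
  · rintro ⟨U, rfl⟩
    rw [add_comp, hP, comp_assoc, sub_comp, id_comp, comp_assoc, hP, comp_id, sub_self,
      comp_zero, add_zero]

end ContinuousLinearMap

theorem extension_stmt6_general
    {H H₀ : Type*} [NormedAddCommGroup H] [InnerProductSpace 𝕜 H] [CompleteSpace H]
    [NormedAddCommGroup H₀] [InnerProductSpace 𝕜 H₀] [CompleteSpace H₀]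
    {Ω : Type*} [MeasurableSpace Ω] (μ : Measure Ω)
    (θA θΨ : H →L[𝕜] Lp H₀ 2 μ)
    (S Sinv : H →L[𝕜] H)
    (hSdef : S = (adjoint θΨ).comp θA)
    (h2 : Sinv.comp S = ContinuousLinearMap.id 𝕜 H) :
    ∀ L : Lp H₀ 2 μ →L[𝕜] H,
      L.comp θA = ContinuousLinearMap.id 𝕜 H ↔
      ∃ U : Lp H₀ 2 μ →L[𝕜] H,
        L = Sinv.comp (adjoint θΨ) +
            U.comp (ContinuousLinearMap.id 𝕜 (Lp H₀ 2 μ) -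
              θA.comp (Sinv.comp (adjoint θΨ))) := by
  have hleft : (Sinv.comp (adjoint θΨ)).comp θA = .id 𝕜 H := by
    rw [comp_assoc, ← hSdef, h2]
  exact comp_eq_id_iff_exists_eq_add_comp_sub hleft

/-- the bounded left-inverses of the analysis operator `θ_A` are exactly the
operators `S_{A,Ψ}⁻¹ θ_Ψ* + U (I - θ_A S_{A,Ψ}⁻¹ θ_Ψ*)` for `U ∈ B(L²(Ω,H₀), H)`. -/
theorem extension_stmt6
    {H H₀ : Type*} [NormedAddCommGroup H] [InnerProductSpace 𝕜 H] [CompleteSpace H]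
    [NormedAddCommGroup H₀] [InnerProductSpace 𝕜 H₀] [CompleteSpace H₀]
    {Ω : Type*} [MeasurableSpace Ω] (μ : Measure Ω)
    (θA θΨ : H →L[𝕜] Lp H₀ 2 μ)
    (S Sinv : H →L[𝕜] H)
    (hSdef : S = (adjoint θΨ).comp θA)
    (hSdef' : S = (adjoint θA).comp θΨ)
    (hpos : S.IsPositive)
    (h1 : S.comp Sinv = ContinuousLinearMap.id 𝕜 H)
    (h2 : Sinv.comp S = ContinuousLinearMap.id 𝕜 H) :
    ∀ L : Lp H₀ 2 μ →L[𝕜] H,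
      L.comp θA = ContinuousLinearMap.id 𝕜 H ↔
      ∃ U : Lp H₀ 2 μ →L[𝕜] H,
        L = Sinv.comp (adjoint θΨ) +
            U.comp (ContinuousLinearMap.id 𝕜 (Lp H₀ 2 μ) -
              θA.comp (Sinv.comp (adjoint θΨ))) :=
  extension_stmt6_general μ θA θΨ S Sinv hSdef h2
end

section
/- Let ({A_α}, {Ψ_α}) be a Riesz continuous operator-valued frame, i.e. a continuous operator-valued frame with P_{A,Ψ} = θ_A S_{A,Ψ}^{-1} θ_Ψ* = I on L²(Ω, H₀). If two continuous operator-valued frames ({B_α},{Φ_α}) and ({C_α},{Ξ_α}) are both duals of ({A_α},{Ψ_α}) (i.e. θ_Φ* θ_A = θ_B* θ_Ψ = I and θ_Ξ* θ_A = θ_C* θ_Ψ = I), then B_α = C_α and Φ_α = Ξ_α for all α ∈ Ω. -/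
open MeasureTheory ContinuousLinearMap

variable {𝕜 : Type*} [RCLike 𝕜]

/-!
Since `P_{A,Ψ} = θ_A S⁻¹ θ_Ψ* = I`, the map `θ_Ψ*` has the left inverse `θ_A S⁻¹`, and its adjoint
gives the left inverse `θ_Ψ (S⁻¹)*` of `θ_A*`. A dual frame's analysis operator `θ_B` is a right
inverse of `θ_Ψ*` (and `θ_Φ` one of `θ_A*`), so it equals that left inverse. Hence the analysis
operators of any two duals agree, and so do the frames, which are their pointwise values.
-/

namespace ContinuousLinearMap

variable {E F : Type*}

theorem eq_of_comp_eq_id_of_comp_eq_id {R : Type*} [Semiring R]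
    [AddCommMonoid E] [Module R E] [TopologicalSpace E]
    [AddCommMonoid F] [Module R F] [TopologicalSpace F]
    {T θ : F →L[R] E} {L : E →L[R] F}
    (hTL : T.comp L = ContinuousLinearMap.id R E) (hLθ : L.comp θ = ContinuousLinearMap.id R F) :
    θ = T :=
  calc θ = (T.comp L).comp θ := by rw [hTL, id_comp]
    _ = T := by rw [comp_assoc, hLθ, comp_id]

variable [NormedAddCommGroup E] [InnerProductSpace 𝕜 E] [CompleteSpace E]
  [NormedAddCommGroup F] [InnerProductSpace 𝕜 F] [CompleteSpace F]

theorem adjoint_comp_eq_id_of_adjoint_comp_eq_id {U V : F →L[𝕜] E}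
    (h : (adjoint U).comp V = ContinuousLinearMap.id 𝕜 F) :
    (adjoint V).comp U = ContinuousLinearMap.id 𝕜 F := by
  simpa only [adjoint_comp, adjoint_adjoint, adjoint_id] using congrArg adjoint h

theorem comp_adjoint_comp_eq_id_of_comp_adjoint_eq_id {T U : F →L[𝕜] E} {R : F →L[𝕜] F}
    (h : T.comp (R.comp (adjoint U)) = ContinuousLinearMap.id 𝕜 E) :
    U.comp ((adjoint R).comp (adjoint T)) = ContinuousLinearMap.id 𝕜 E := by
  simpa only [adjoint_comp, adjoint_adjoint, adjoint_id, comp_assoc] using congrArg adjoint h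

theorem eq_comp_of_adjoint_comp_eq_id {T U θ : F →L[𝕜] E} {R : F →L[𝕜] F}
    (hP : T.comp (R.comp (adjoint U)) = ContinuousLinearMap.id 𝕜 E)
    (hθ : (adjoint θ).comp U = ContinuousLinearMap.id 𝕜 F) :
    θ = T.comp R :=
  eq_of_comp_eq_id_of_comp_eq_id (by rwa [comp_assoc])
    (adjoint_comp_eq_id_of_adjoint_comp_eq_id hθ)

end ContinuousLinearMap

theorem extension_stmt8_general
    {H H₀ : Type*} [NormedAddCommGroup H] [InnerProductSpace 𝕜 H] [CompleteSpace H]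
    [NormedAddCommGroup H₀] [InnerProductSpace 𝕜 H₀] [CompleteSpace H₀]
    {Ω : Type*} [MeasurableSpace Ω] (μ : Measure Ω)
    (B Φ C Ξ : Ω → H →L[𝕜] H₀)
    (θA θΨ θB θΦ θC θΞ : H →L[𝕜] Lp H₀ 2 μ)
    (hθB : ∀ (h : H) (α : Ω), (θB h : Lp H₀ 2 μ) α = B α h)
    (hθΦ : ∀ (h : H) (α : Ω), (θΦ h : Lp H₀ 2 μ) α = Φ α h)
    (hθC : ∀ (h : H) (α : Ω), (θC h : Lp H₀ 2 μ) α = C α h)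
    (hθΞ : ∀ (h : H) (α : Ω), (θΞ h : Lp H₀ 2 μ) α = Ξ α h)
    (Sinv : H →L[𝕜] H)
    -- the Riesz condition `P_{A,Ψ} = I_{L²(Ω,H₀)}`
    (hRiesz : θA.comp (Sinv.comp (adjoint θΨ)) = ContinuousLinearMap.id 𝕜 (Lp H₀ 2 μ))
    -- `({B_α},{Φ_α})` is a dual of `({A_α},{Ψ_α})`
    (hd1 : (adjoint θΦ).comp θA = ContinuousLinearMap.id 𝕜 H)
    (hd2 : (adjoint θB).comp θΨ = ContinuousLinearMap.id 𝕜 H)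
    -- `({C_α},{Ξ_α})` is a dual of `({A_α},{Ψ_α})`
    (hd3 : (adjoint θΞ).comp θA = ContinuousLinearMap.id 𝕜 H)
    (hd4 : (adjoint θC).comp θΨ = ContinuousLinearMap.id 𝕜 H) :
    (∀ α : Ω, B α = C α) ∧ (∀ α : Ω, Φ α = Ξ α) := by
  have hRieszAdj := comp_adjoint_comp_eq_id_of_comp_adjoint_eq_id hRiesz
  have hBC : θB = θC :=
    (eq_comp_of_adjoint_comp_eq_id hRiesz hd2).trans
      (eq_comp_of_adjoint_comp_eq_id hRiesz hd4).symm
  have hΦΞ : θΦ = θΞ :=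
    (eq_comp_of_adjoint_comp_eq_id hRieszAdj hd1).trans
      (eq_comp_of_adjoint_comp_eq_id hRieszAdj hd3).symm
  refine ⟨fun α => ?_, fun α => ?_⟩ <;> ext h
  · rw [← hθB h α, ← hθC h α, hBC]
  · rw [← hθΦ h α, ← hθΞ h α, hΦΞ]

/-- a Riesz continuous operator-valued frame (`P_{A,Ψ} = I` on `L²(Ω,H₀)`)
has a unique dual: any two dual continuous operator-valued frames coincide. -/
theorem extension_stmt8
    {H H₀ : Type*} [NormedAddCommGroup H] [InnerProductSpace 𝕜 H] [CompleteSpace H]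
    [NormedAddCommGroup H₀] [InnerProductSpace 𝕜 H₀] [CompleteSpace H₀]
    {Ω : Type*} [MeasurableSpace Ω] (μ : Measure Ω)
    (A Ψ B Φ C Ξ : Ω → H →L[𝕜] H₀)
    (θA θΨ θB θΦ θC θΞ : H →L[𝕜] Lp H₀ 2 μ)
    (hθB : ∀ (h : H) (α : Ω), (θB h : Lp H₀ 2 μ) α = B α h)
    (hθΦ : ∀ (h : H) (α : Ω), (θΦ h : Lp H₀ 2 μ) α = Φ α h)
    (hθC : ∀ (h : H) (α : Ω), (θC h : Lp H₀ 2 μ) α = C α h)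
    (hθΞ : ∀ (h : H) (α : Ω), (θΞ h : Lp H₀ 2 μ) α = Ξ α h)
    (S Sinv : H →L[𝕜] H)
    (hSdef : S = (adjoint θΨ).comp θA)
    (hpos : S.IsPositive)
    (h1 : S.comp Sinv = ContinuousLinearMap.id 𝕜 H)
    (h2 : Sinv.comp S = ContinuousLinearMap.id 𝕜 H)
    -- the Riesz condition `P_{A,Ψ} = I_{L²(Ω,H₀)}`
    (hRiesz : θA.comp (Sinv.comp (adjoint θΨ)) = ContinuousLinearMap.id 𝕜 (Lp H₀ 2 μ))
    -- `({B_α},{Φ_α})` is a dual of `({A_α},{Ψ_α})`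
    (hd1 : (adjoint θΦ).comp θA = ContinuousLinearMap.id 𝕜 H)
    (hd2 : (adjoint θB).comp θΨ = ContinuousLinearMap.id 𝕜 H)
    -- `({C_α},{Ξ_α})` is a dual of `({A_α},{Ψ_α})`
    (hd3 : (adjoint θΞ).comp θA = ContinuousLinearMap.id 𝕜 H)
    (hd4 : (adjoint θC).comp θΨ = ContinuousLinearMap.id 𝕜 H) :
    (∀ α : Ω, B α = C α) ∧ (∀ α : Ω, Φ α = Ξ α) :=
  extension_stmt8_general μ B Φ C Ξ θA θΨ θB θΦ θC θΞ hθB hθΦ hθC hθΞ Sinv hRiesz hd1 hd2 hd3 hd4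
end

section
/- Let ({A_α},{Ψ_α}) and ({B_α},{Φ_α}) be Parseval continuous operator-valued frames (θ_Ψ* θ_A = I and θ_Φ* θ_B = I) that are orthogonal (θ_Φ* θ_A = θ_B* θ_Ψ = 0). If C, D, E, F ∈ B(H) satisfy C*E + D*F = I_H, then the family ({A_α C + B_α D}, {Ψ_α E + Φ_α F}) is a Parseval continuous operator-valued frame, i.e. θ_{ΨE+ΦF}* θ_{AC+BD} = I_H. -/
/-! Expanding `(θ_Ψ E + θ_Φ F)* (θ_A C + θ_B D)` bilinearly, the Parseval and orthogonality
conditions (with `θ_Ψ* θ_B = (θ_B* θ_Ψ)* = 0`) kill the cross terms and leave `E* C + F* D`,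
the adjoint of `C* E + D* F = I`. -/

open MeasureTheory ContinuousLinearMap

variable {𝕜 : Type*} [RCLike 𝕜]

namespace ContinuousLinearMap

variable {E F G : Type*} [NormedAddCommGroup E] [InnerProductSpace 𝕜 E] [CompleteSpace E]
  [NormedAddCommGroup F] [InnerProductSpace 𝕜 F] [CompleteSpace F]
  [NormedAddCommGroup G] [InnerProductSpace 𝕜 G] [CompleteSpace G]

theorem adjoint_comp_eq_zero_comm {A B : E →L[𝕜] F} (h : (adjoint A).comp B = 0) :
    (adjoint B).comp A = 0 := by
  simpa only [adjoint_comp, adjoint_adjoint, map_zero] using congrArg adjoint h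

theorem adjoint_add_comp_add (A B Ψ Φ : F →L[𝕜] G) (C D E' F' : E →L[𝕜] F) :
    (adjoint (Ψ.comp E' + Φ.comp F')).comp (A.comp C + B.comp D) =
      (adjoint E').comp (((adjoint Ψ).comp A).comp C) +
        (adjoint E').comp (((adjoint Ψ).comp B).comp D) +
        (adjoint F').comp (((adjoint Φ).comp A).comp C) +
        (adjoint F').comp (((adjoint Φ).comp B).comp D) := by
  simp only [map_add, adjoint_comp, add_comp, comp_add, comp_assoc]
  abel

end ContinuousLinearMap

/-- if `({A_α},{Ψ_α})` and `({B_α},{Φ_α})` are orthogonal Parseval continuous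
operator-valued frames and `C*E + D*F = I`, then `({A_α C + B_α D}, {Ψ_α E + Φ_α F})` is a
Parseval continuous operator-valued frame (using `θ_{AC+BD} = θ_A C + θ_B D` and
`θ_{ΨE+ΦF} = θ_Ψ E + θ_Φ F`). -/
theorem extension_stmt9
    {H H₀ : Type*} [NormedAddCommGroup H] [InnerProductSpace 𝕜 H] [CompleteSpace H]
    [NormedAddCommGroup H₀] [InnerProductSpace 𝕜 H₀] [CompleteSpace H₀]
    {Ω : Type*} [MeasurableSpace Ω] (μ : Measure Ω)
    (θA θB θΨ θΦ : H →L[𝕜] Lp H₀ 2 μ)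
    -- Parseval conditions
    (hP1 : (adjoint θΨ).comp θA = ContinuousLinearMap.id 𝕜 H)
    (hP2 : (adjoint θΦ).comp θB = ContinuousLinearMap.id 𝕜 H)
    -- orthogonality conditions
    (ho1 : (adjoint θΦ).comp θA = 0)
    (ho2 : (adjoint θB).comp θΨ = 0)
    (C D E F : H →L[𝕜] H)
    (hCDEF : (adjoint C).comp E + (adjoint D).comp F = ContinuousLinearMap.id 𝕜 H) :
    (adjoint (θΨ.comp E + θΦ.comp F)).comp (θA.comp C + θB.comp D) =
      ContinuousLinearMap.id 𝕜 H := by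
  have hΨB : (adjoint θΨ).comp θB = 0 := adjoint_comp_eq_zero_comm ho2
  have hEF : (adjoint E).comp C + (adjoint F).comp D = ContinuousLinearMap.id 𝕜 H := by
    simpa only [map_add, adjoint_comp, adjoint_adjoint, adjoint_id] using congrArg adjoint hCDEF
  rw [adjoint_add_comp_add, hP1, hP2, ho1, hΨB]
  simpa only [id_comp, zero_comp, comp_zero, add_zero] using hEF
end

section
/- Let ({A_α},{Ψ_α}) and ({B_α},{Φ_α}) be continuous operator-valued frames in B(H, H₀) that are orthogonal (θ_Φ* θ_A = θ_B* θ_Ψ = 0). Then the direct-sum family ({A_α ⊕ B_α}, {Ψ_α ⊕ Φ_α}) in B(H ⊕ H, H₀), where (A_α ⊕ B_α)(h ⊕ g) = A_α h + B_α g, is a continuous operator-valued frame for H ⊕ H, with frame operator S_{A⊕B, Ψ⊕Φ} = S_{A,Ψ} ⊕ S_{B,Φ}. If moreover both frames are Parseval, the direct sum is Parseval. -/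
open MeasureTheory ContinuousLinearMap

variable {𝕜 : Type*} [RCLike 𝕜]

local notation "⟪" x ", " y "⟫" => @inner 𝕜 _ _ x y

/-!
Expanding `⟪A h + B g, Ψ h' + Φ g'⟫` gives four integrals; the two mixed ones vanish by
orthogonality, so the frame operator is block diagonal. Positivity, invertibility and being the
identity pass from the blocks to `S_{A,Ψ} ⊕ S_{B,Φ}`, the last two because `(T, U) ↦ T ⊕ U` is
a monoid hom.
-/

namespace WithLp

variable {E F : Type*} [NormedAddCommGroup E] [InnerProductSpace 𝕜 E]
  [NormedAddCommGroup F] [InnerProductSpace 𝕜 F]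

noncomputable def prodDiagonal :
    (E →L[𝕜] E) × (F →L[𝕜] F) →* (WithLp 2 (E × F) →L[𝕜] WithLp 2 (E × F)) where
  toFun T := (prodContinuousLinearEquiv 2 𝕜 E F).symm.toContinuousLinearMap ∘L
    T.1.prodMap T.2 ∘L (prodContinuousLinearEquiv 2 𝕜 E F).toContinuousLinearMap
  map_one' := rfl
  map_mul' _ _ := rfl

theorem prodDiagonal_apply (T : (E →L[𝕜] E) × (F →L[𝕜] F)) (p : WithLp 2 (E × F)) :
    (prodDiagonal T p).ofLp = (T.1 p.ofLp.1, T.2 p.ofLp.2) :=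
  rfl

theorem inner_prodDiagonal_apply (T : (E →L[𝕜] E) × (F →L[𝕜] F)) (p q : WithLp 2 (E × F)) :
    ⟪prodDiagonal T p, q⟫ = ⟪T.1 p.ofLp.1, q.ofLp.1⟫ + ⟪T.2 p.ofLp.2, q.ofLp.2⟫ :=
  prod_inner_apply _ _

theorem isPositive_prodDiagonal {T : E →L[𝕜] E} {U : F →L[𝕜] F} (hT : T.IsPositive)
    (hU : U.IsPositive) : (prodDiagonal (T, U)).IsPositive := by
  refine ⟨fun p q => ?_, fun p => ?_⟩
  · simp only [coe_coe, prod_inner_apply, prodDiagonal_apply,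
      hT.inner_left_eq_inner_right, hU.inner_left_eq_inner_right]
  · rw [reApplyInnerSelf, inner_prodDiagonal_apply, map_add]
    exact add_nonneg (hT.re_inner_nonneg_left _) (hU.re_inner_nonneg_left _)

end WithLp

theorem integral_inner_add_add {Ω E : Type*} [MeasurableSpace Ω] {μ : Measure Ω}
    [NormedAddCommGroup E] [InnerProductSpace 𝕜 E] {a b c d : Ω → E}
    (hac : Integrable (fun α => ⟪a α, c α⟫) μ) (had : Integrable (fun α => ⟪a α, d α⟫) μ)
    (hbc : Integrable (fun α => ⟪b α, c α⟫) μ) (hbd : Integrable (fun α => ⟪b α, d α⟫) μ) :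
    ∫ α, ⟪a α + b α, c α + d α⟫ ∂μ =
      ∫ α, ⟪a α, c α⟫ ∂μ + ∫ α, ⟪a α, d α⟫ ∂μ + ∫ α, ⟪b α, c α⟫ ∂μ + ∫ α, ⟪b α, d α⟫ ∂μ := by
  simp only [inner_add_left, inner_add_right]
  rw [integral_add (f := fun α => ⟪a α, c α⟫ + ⟪b α, c α⟫) (g := fun α => ⟪a α, d α⟫ + ⟪b α, d α⟫)
      (hac.add hbc) (had.add hbd), integral_add hac hbc, integral_add had hbd]
  ring

theorem extension_stmt10_general
    {H H₀ : Type*} [NormedAddCommGroup H] [InnerProductSpace 𝕜 H]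
    [NormedAddCommGroup H₀] [InnerProductSpace 𝕜 H₀]
    {Ω : Type*} [MeasurableSpace Ω] (μ : Measure Ω)
    (A B Ψ Φ : Ω → H →L[𝕜] H₀)
    (SA SB : H →L[𝕜] H)
    (hSA : ∀ h g : H, ⟪SA h, g⟫ = ∫ α, ⟪A α h, Ψ α g⟫ ∂μ)
    (hSB : ∀ h g : H, ⟪SB h, g⟫ = ∫ α, ⟪B α h, Φ α g⟫ ∂μ)
    (hposA : SA.IsPositive) (hposB : SB.IsPositive)
    (hinvA : IsUnit SA) (hinvB : IsUnit SB)
    -- orthogonality (weakly): `θ_Φ* θ_A = 0 = θ_B* θ_Ψ`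
    (ho1 : ∀ h g : H, ∫ α, ⟪A α h, Φ α g⟫ ∂μ = (0 : 𝕜))
    (ho2 : ∀ h g : H, ∫ α, ⟪B α h, Ψ α g⟫ ∂μ = (0 : 𝕜))
    (hi1 : ∀ h g : H, Integrable (fun α => (⟪A α h, Ψ α g⟫ : 𝕜)) μ)
    (hi2 : ∀ h g : H, Integrable (fun α => (⟪A α h, Φ α g⟫ : 𝕜)) μ)
    (hi3 : ∀ h g : H, Integrable (fun α => (⟪B α h, Ψ α g⟫ : 𝕜)) μ)
    (hi4 : ∀ h g : H, Integrable (fun α => (⟪B α h, Φ α g⟫ : 𝕜)) μ) :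
    ∃ S : WithLp 2 (H × H) →L[𝕜] WithLp 2 (H × H),
      (∀ p q : WithLp 2 (H × H),
        ⟪S p, q⟫ =
          ∫ α, ⟪A α (WithLp.equiv 2 (H × H) p).1 + B α (WithLp.equiv 2 (H × H) p).2,
                Ψ α (WithLp.equiv 2 (H × H) q).1 + Φ α (WithLp.equiv 2 (H × H) q).2⟫ ∂μ) ∧
      (∀ p : WithLp 2 (H × H),
        WithLp.equiv 2 (H × H) (S p) =
          (SA (WithLp.equiv 2 (H × H) p).1, SB (WithLp.equiv 2 (H × H) p).2)) ∧
      S.IsPositive ∧ IsUnit S ∧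
      (SA = ContinuousLinearMap.id 𝕜 H → SB = ContinuousLinearMap.id 𝕜 H →
        S = ContinuousLinearMap.id 𝕜 (WithLp 2 (H × H))) := by
  refine ⟨WithLp.prodDiagonal (SA, SB), fun p q => ?_, WithLp.prodDiagonal_apply _,
    WithLp.isPositive_prodDiagonal hposA hposB,
    (Prod.isUnit_iff.2 ⟨hinvA, hinvB⟩).map _, ?_⟩
  · rw [WithLp.inner_prodDiagonal_apply, WithLp.equiv_apply, WithLp.equiv_apply,
      integral_inner_add_add (hi1 _ _) (hi2 _ _) (hi3 _ _) (hi4 _ _), hSA, hSB, ho1, ho2,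
      add_zero, add_zero]
  · rintro rfl rfl
    exact map_one WithLp.prodDiagonal

/-- two orthogonal continuous operator-valued frames are disjoint: the
direct-sum family `({A_α ⊕ B_α}, {Ψ_α ⊕ Φ_α})` on `H ⊕ H` is a continuous operator-valued
frame whose frame operator is `S_{A,Ψ} ⊕ S_{B,Φ}`; if both are Parseval so is the sum. -/
theorem extension_stmt10
    {H H₀ : Type*} [NormedAddCommGroup H] [InnerProductSpace 𝕜 H] [CompleteSpace H]
    [NormedAddCommGroup H₀] [InnerProductSpace 𝕜 H₀] [CompleteSpace H₀]
    {Ω : Type*} [MeasurableSpace Ω] (μ : Measure Ω)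
    (A B Ψ Φ : Ω → H →L[𝕜] H₀)
    (SA SB : H →L[𝕜] H)
    (hSA : ∀ h g : H, ⟪SA h, g⟫ = ∫ α, ⟪A α h, Ψ α g⟫ ∂μ)
    (hSB : ∀ h g : H, ⟪SB h, g⟫ = ∫ α, ⟪B α h, Φ α g⟫ ∂μ)
    (hposA : SA.IsPositive) (hposB : SB.IsPositive)
    (hinvA : IsUnit SA) (hinvB : IsUnit SB)
    -- orthogonality (weakly): `θ_Φ* θ_A = 0 = θ_B* θ_Ψ`
    (ho1 : ∀ h g : H, ∫ α, ⟪A α h, Φ α g⟫ ∂μ = (0 : 𝕜))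
    (ho2 : ∀ h g : H, ∫ α, ⟪B α h, Ψ α g⟫ ∂μ = (0 : 𝕜))
    (hi1 : ∀ h g : H, Integrable (fun α => (⟪A α h, Ψ α g⟫ : 𝕜)) μ)
    (hi2 : ∀ h g : H, Integrable (fun α => (⟪A α h, Φ α g⟫ : 𝕜)) μ)
    (hi3 : ∀ h g : H, Integrable (fun α => (⟪B α h, Ψ α g⟫ : 𝕜)) μ)
    (hi4 : ∀ h g : H, Integrable (fun α => (⟪B α h, Φ α g⟫ : 𝕜)) μ) :
    ∃ S : WithLp 2 (H × H) →L[𝕜] WithLp 2 (H × H),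
      (∀ p q : WithLp 2 (H × H),
        ⟪S p, q⟫ =
          ∫ α, ⟪A α (WithLp.equiv 2 (H × H) p).1 + B α (WithLp.equiv 2 (H × H) p).2,
                Ψ α (WithLp.equiv 2 (H × H) q).1 + Φ α (WithLp.equiv 2 (H × H) q).2⟫ ∂μ) ∧
      (∀ p : WithLp 2 (H × H),
        WithLp.equiv 2 (H × H) (S p) =
          (SA (WithLp.equiv 2 (H × H) p).1, SB (WithLp.equiv 2 (H × H) p).2)) ∧
      S.IsPositive ∧ IsUnit S ∧
      (SA = ContinuousLinearMap.id 𝕜 H → SB = ContinuousLinearMap.id 𝕜 H →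
        S = ContinuousLinearMap.id 𝕜 (WithLp 2 (H × H))) :=
  extension_stmt10_general μ A B Ψ Φ SA SB hSA hSB hposA hposB hinvA hinvB ho1 ho2 hi1 hi2 hi3 hi4
end

section
/- Let {x_α} and {τ_α} be families of vectors in a Hilbert space H forming a continuous frame, i.e. h ↦ (α ↦ ⟨h, x_α⟩) and h ↦ (α ↦ ⟨h, τ_α⟩) define bounded operators θ_x, θ_τ : H → L²(Ω, 𝕂), and S_{x,τ} := θ_τ* θ_x is positive and invertible. If h ∈ H has representations h = ∫ f(α) x_α dμ(α) = ∫ g(α) τ_α dμ(α) (weakly) for measurable scalar functions f, g, then ∫ f(α) conj(g(α)) dμ(α) = ∫ ⟨h, S_{x,τ}^{-1}τ_α⟩⟨S_{x,τ}^{-1}x_α, h⟩ dμ(α) + ∫ (f(α) − ⟨h, S_{x,τ}^{-1}τ_α⟩)(conj(g(α)) − ⟨S_{x,τ}^{-1}x_α, h⟩) dμ(α). -/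
open MeasureTheory ContinuousLinearMap

variable {𝕜 : Type*} [RCLike 𝕜]

local notation "⟪" x ", " y "⟫" => @inner 𝕜 _ _ x y

/-! Since `S⁻¹` is symmetric, the canonical coefficients are `a α = ⟨h, S⁻¹τ_α⟩ = ⟨k, τ_α⟩`
and `b α = ⟨S⁻¹x_α, h⟩ = ⟨x_α, k⟩` with `k = S⁻¹h`. The weak representations of `h` give
`∫ f b = ⟨h, k⟩` and `∫ a ḡ = ⟨k, h⟩`, and `S k = h` gives `∫ a b = ⟨h, k⟩`; all three agree by
symmetry of `S⁻¹`, so expanding `∫ (f - a)(ḡ - b)` the cross terms collapse to `-∫ a b`. -/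

theorem LinearMap.IsSymmetric.of_rightInverse {E : Type*} [NormedAddCommGroup E]
    [InnerProductSpace 𝕜 E] {S R : E →ₗ[𝕜] E} (hS : S.IsSymmetric)
    (hSR : Function.RightInverse R S) : R.IsSymmetric := fun u v =>
  calc ⟪R u, v⟫ = ⟪R u, S (R v)⟫ := by rw [hSR v]
    _ = ⟪S (R u), R v⟫ := (hS _ _).symm
    _ = ⟪u, R v⟫ := by rw [hSR u]

theorem integral_mul_eq_integral_mul_add_integral_sub_mul_sub {R : Type*} [NormedRing R]
    [NormedSpace ℝ R] {Ω : Type*} [MeasurableSpace Ω] {μ : Measure Ω} {f g a b : Ω → R}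
    (hf : MemLp f 2 μ) (hg : MemLp g 2 μ) (ha : MemLp a 2 μ) (hb : MemLp b 2 μ)
    (hfb : ∫ α, f α * b α ∂μ = ∫ α, a α * b α ∂μ)
    (hag : ∫ α, a α * g α ∂μ = ∫ α, a α * b α ∂μ) :
    ∫ α, f α * g α ∂μ = ∫ α, a α * b α ∂μ + ∫ α, (f α - a α) * (g α - b α) ∂μ := by
  have hfg : Integrable (fun α => f α * g α) μ := hf.integrable_mul hg
  have hfb' : Integrable (fun α => f α * b α) μ := hf.integrable_mul hb
  have hag' : Integrable (fun α => a α * g α) μ := ha.integrable_mul hg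
  have hab : Integrable (fun α => a α * b α) μ := ha.integrable_mul hb
  have expand : ∫ α, (f α - a α) * (g α - b α) ∂μ =
      (∫ α, f α * g α ∂μ) - (∫ α, a α * g α ∂μ) - ((∫ α, f α * b α ∂μ) - ∫ α, a α * b α ∂μ) := by
    simp only [sub_mul, mul_sub]
    rw [integral_sub (by exact hfg.sub hag') (by exact hfb'.sub hab), integral_sub hfg hag',
      integral_sub hfb' hab]
  rw [expand, hfb, hag]
  abel

theorem extension_stmt11_general
    {H : Type*} [NormedAddCommGroup H] [InnerProductSpace 𝕜 H]
    {Ω : Type*} [MeasurableSpace Ω] (μ : Measure Ω)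
    (x τ : Ω → H)
    -- Bessel conditions for the two families
    (hx : ∀ u : H, MemLp (fun α => (⟪x α, u⟫ : 𝕜)) 2 μ)
    (hτ : ∀ u : H, MemLp (fun α => (⟪τ α, u⟫ : 𝕜)) 2 μ)
    (S Sinv : H →L[𝕜] H)
    -- `S = S_{x,τ} = S_{τ,x}` weakly
    (hS' : ∀ h u : H, ⟪u, S h⟫ = ∫ α, ⟪τ α, h⟫ * ⟪u, x α⟫ ∂μ)
    (hpos : S.IsPositive)
    (h1 : S.comp Sinv = ContinuousLinearMap.id 𝕜 H)
    (h : H) (f g : Ω → 𝕜)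
    (hfL2 : MemLp f 2 μ) (hgL2 : MemLp g 2 μ)
    -- `h = ∫ f(α) x_α dμ(α) = ∫ g(α) τ_α dμ(α)` in the weak sense
    (hf : ∀ u : H, ⟪u, h⟫ = ∫ α, f α * ⟪u, x α⟫ ∂μ)
    (hg : ∀ u : H, ⟪u, h⟫ = ∫ α, g α * ⟪u, τ α⟫ ∂μ) :
    ∫ α, f α * (starRingEnd 𝕜) (g α) ∂μ =
      (∫ α, ⟪Sinv (τ α), h⟫ * ⟪h, Sinv (x α)⟫ ∂μ) +
      ∫ α, (f α - ⟪Sinv (τ α), h⟫) * ((starRingEnd 𝕜) (g α) - ⟪h, Sinv (x α)⟫) ∂μ := by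
  have hright : Function.RightInverse Sinv S := fun u => DFunLike.congr_fun h1 u
  have hSinv : (Sinv : H →ₗ[𝕜] H).IsSymmetric := hpos.isSymmetric.of_rightInverse hright
  set k := Sinv h
  have hcoef_τ : ∀ α, ⟪Sinv (τ α), h⟫ = ⟪τ α, k⟫ := fun α => hSinv _ _
  have hcoef_x : ∀ α, ⟪h, Sinv (x α)⟫ = ⟪k, x α⟫ := fun α => (hSinv _ _).symm
  simp only [hcoef_τ, hcoef_x]
  have hb : MemLp (fun α => ⟪k, x α⟫) 2 μ := by
    simpa [Pi.star_def, RCLike.star_def] using (hx k).star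
  have hab : ∫ α, ⟪τ α, k⟫ * ⟪k, x α⟫ ∂μ = ⟪k, h⟫ := by rw [← hS' k k, hright h]
  refine integral_mul_eq_integral_mul_add_integral_sub_mul_sub hfL2 hgL2.star (hτ k) hb ?_ ?_
  · rw [hab, hf k]
  · calc ∫ α, ⟪τ α, k⟫ * (starRingEnd 𝕜) (g α) ∂μ
        = ∫ α, (starRingEnd 𝕜) (g α * ⟪k, τ α⟫) ∂μ := by simp [mul_comm]
      _ = ⟪h, k⟫ := by rw [integral_conj, ← hg k, inner_conj_symm]
      _ = ∫ α, ⟪τ α, k⟫ * ⟪k, x α⟫ ∂μ := by rw [hab]; exact (hSinv h h).symm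

/-- if `h = ∫ f(α) x_α dμ = ∫ g(α) τ_α dμ` (weakly) for a continuous frame
`({x_α},{τ_α})` with frame operator `S`, then
`∫ f ḡ = ∫ ⟨h, S⁻¹τ_α⟩⟨S⁻¹x_α, h⟩ + ∫ (f − ⟨h, S⁻¹τ_α⟩)(ḡ − ⟨S⁻¹x_α, h⟩)`.
(Here the paper's inner product `⟨u,v⟩` is rendered as `⟪v, u⟫` in Mathlib's convention.) -/
theorem extension_stmt11
    {H : Type*} [NormedAddCommGroup H] [InnerProductSpace 𝕜 H] [CompleteSpace H]
    {Ω : Type*} [MeasurableSpace Ω] (μ : Measure Ω)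
    (x τ : Ω → H)
    -- Bessel conditions for the two families
    (hx : ∀ u : H, MemLp (fun α => (⟪x α, u⟫ : 𝕜)) 2 μ)
    (hτ : ∀ u : H, MemLp (fun α => (⟪τ α, u⟫ : 𝕜)) 2 μ)
    (S Sinv : H →L[𝕜] H)
    -- `S = S_{x,τ} = S_{τ,x}` weakly
    (hS : ∀ h u : H, ⟪u, S h⟫ = ∫ α, ⟪x α, h⟫ * ⟪u, τ α⟫ ∂μ)
    (hS' : ∀ h u : H, ⟪u, S h⟫ = ∫ α, ⟪τ α, h⟫ * ⟪u, x α⟫ ∂μ)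
    (hpos : S.IsPositive)
    (h1 : S.comp Sinv = ContinuousLinearMap.id 𝕜 H)
    (h2 : Sinv.comp S = ContinuousLinearMap.id 𝕜 H)
    (h : H) (f g : Ω → 𝕜)
    (hfL2 : MemLp f 2 μ) (hgL2 : MemLp g 2 μ)
    -- `h = ∫ f(α) x_α dμ(α) = ∫ g(α) τ_α dμ(α)` in the weak sense
    (hf : ∀ u : H, ⟪u, h⟫ = ∫ α, f α * ⟪u, x α⟫ ∂μ)
    (hg : ∀ u : H, ⟪u, h⟫ = ∫ α, g α * ⟪u, τ α⟫ ∂μ) :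
    ∫ α, f α * (starRingEnd 𝕜) (g α) ∂μ =
      (∫ α, ⟪Sinv (τ α), h⟫ * ⟪h, Sinv (x α)⟫ ∂μ) +
      ∫ α, (f α - ⟪Sinv (τ α), h⟫) * ((starRingEnd 𝕜) (g α) - ⟪h, Sinv (x α)⟫) ∂μ :=
  extension_stmt11_general μ x τ hx hτ S Sinv hS' hpos h1 h f g hfL2 hgL2 hf hg
end

section
/- Let ({x_α}, {τ_α}) be a tight continuous frame for a finite-dimensional Hilbert space H of dimension m, i.e. S_{x,τ} = b·I_H for some b > 0. Then the extended variation formula holds: ∫∫ ⟨τ_α, x_β⟩⟨τ_β, x_α⟩ dμ(β) dμ(α) = (1/m)(∫ ⟨x_α, τ_α⟩ dμ(α))² = ∫∫ ⟨τ_α, τ_β⟩⟨x_β, x_α⟩ dμ(β) dμ(α). -/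
open MeasureTheory ContinuousLinearMap

local notation "⟪" x ", " y "⟫" => @inner ℂ _ _ x y

/-!
Tightness evaluated at `h = τ α`, `u = x α` turns each inner integral of the double integrals
into `b ⟨x_α, τ_α⟩`, so both double integrals equal `b ∫ ⟨x_α, τ_α⟩`. Tightness on an
orthonormal basis `(e_i)` gives `∫ ⟨x_α, τ_α⟩ = Σ_i ∫ ⟨x_α, e_i⟩⟨e_i, τ_α⟩ = b m`
(this is `Trace S = b m`), so all three quantities equal `b² m`.
-/

section TightFrame

variable {𝕜 H Ω : Type*} [RCLike 𝕜] [NormedAddCommGroup H] [InnerProductSpace 𝕜 H]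
  [MeasurableSpace Ω] {μ : Measure Ω} {x τ : Ω → H} {b : 𝕜}

/-- `S_{x,τ} = b • id` in weak form, where `S_{x,τ} h = ∫ inner 𝕜 (x α) h • τ α`. -/
def IsTightFrame (μ : Measure Ω) (x τ : Ω → H) (b : 𝕜) : Prop :=
  ∀ h u : H, b * inner 𝕜 u h = ∫ α, inner 𝕜 (x α) h * inner 𝕜 u (τ α) ∂μ

theorem IsTightFrame.integral_integral_inner_mul_inner (hS : IsTightFrame μ x τ b)
    (y z : Ω → H) :
    ∫ α, ∫ β, inner 𝕜 (x β) (y α) * inner 𝕜 (z α) (τ β) ∂μ ∂μ =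
      b * ∫ α, inner 𝕜 (z α) (y α) ∂μ := by
  simp_rw [fun α => (hS (y α) (z α)).symm, integral_const_mul]

theorem IsTightFrame.integral_inner_eq_mul_finrank [FiniteDimensional 𝕜 H]
    (hS : IsTightFrame μ x τ b)
    (hint : ∀ v : H, Integrable (fun α => inner 𝕜 (x α) v * inner 𝕜 v (τ α)) μ) :
    ∫ α, inner 𝕜 (x α) (τ α) ∂μ = b * Module.finrank 𝕜 H := by
  set e := stdOrthonormalBasis 𝕜 H
  calc ∫ α, inner 𝕜 (x α) (τ α) ∂μ
      = ∫ α, ∑ i, inner 𝕜 (x α) (e i) * inner 𝕜 (e i) (τ α) ∂μ := by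
        simp_rw [e.sum_inner_mul_inner]
    _ = ∑ i, ∫ α, inner 𝕜 (x α) (e i) * inner 𝕜 (e i) (τ α) ∂μ :=
        integral_finsetSum _ fun i _ => hint (e i)
    _ = ∑ i, b * inner 𝕜 (e i) (e i) := by simp_rw [fun i => (hS (e i) (e i)).symm]
    _ = b * Module.finrank 𝕜 H := by
        simp [mul_comm]

end TightFrame

theorem extension_stmt15_general
    {H : Type*} [NormedAddCommGroup H] [InnerProductSpace ℂ H]
    [FiniteDimensional ℂ H] {m : ℕ} (hm : Module.finrank ℂ H = m)
    {Ω : Type*} [MeasurableSpace Ω] (μ : Measure Ω)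
    (x τ : Ω → H) (b : ℝ)
    -- tightness: `S_{x,τ} = b·I = S_{τ,x}` weakly
    (hS : ∀ h u : H, (b : ℂ) * ⟪u, h⟫ = ∫ α, ⟪x α, h⟫ * ⟪u, τ α⟫ ∂μ)
    (hS' : ∀ h u : H, (b : ℂ) * ⟪u, h⟫ = ∫ α, ⟪τ α, h⟫ * ⟪u, x α⟫ ∂μ)
    (hint : ∀ u v : H, Integrable (fun α => (⟪x α, u⟫ : ℂ) * ⟪v, τ α⟫) μ) :
    (∫ α, ∫ β, ⟪x β, τ α⟫ * ⟪x α, τ β⟫ ∂μ ∂μ =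
      (1 / (m : ℂ)) * (∫ α, ⟪τ α, x α⟫ ∂μ) ^ 2) ∧
    (∫ α, ∫ β, ⟪x β, τ α⟫ * ⟪x α, τ β⟫ ∂μ ∂μ =
      ∫ α, ∫ β, ⟪τ β, τ α⟫ * ⟪x α, x β⟫ ∂μ ∂μ) := by
  have hS : IsTightFrame μ x τ (b : ℂ) := hS
  have hS' : IsTightFrame μ τ x (b : ℂ) := hS'
  have htrace : ∫ α, ⟪x α, τ α⟫ ∂μ = b * m := by
    rw [hS.integral_inner_eq_mul_finrank fun v => hint v v, hm]
  have htrace' : ∫ α, ⟪τ α, x α⟫ ∂μ = b * m := by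
    calc ∫ α, ⟪τ α, x α⟫ ∂μ = starRingEnd ℂ (∫ α, ⟪x α, τ α⟫ ∂μ) := by
          simp_rw [← integral_conj, inner_conj_symm]
      _ = b * m := by simp [htrace]
  refine ⟨?_, ?_⟩
  · rw [hS.integral_integral_inner_mul_inner, htrace, htrace']
    rcases eq_or_ne (m : ℂ) 0 with hm0 | hm0
    · simp [hm0]
    · field_simp
  · rw [hS.integral_integral_inner_mul_inner, hS'.integral_integral_inner_mul_inner]

/-- extended variation formula for a tight continuous frame
(`S_{x,τ} = b·I`, `b > 0`) on an `m`-dimensional complex Hilbert space: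
`∫∫ ⟨τ_α,x_β⟩⟨τ_β,x_α⟩ = (1/m)(∫ ⟨x_α,τ_α⟩)² = ∫∫ ⟨τ_α,τ_β⟩⟨x_β,x_α⟩`.
(The paper's `⟨u,v⟩` is `⟪v, u⟫` in Mathlib's convention.) -/
theorem extension_stmt15
    {H : Type*} [NormedAddCommGroup H] [InnerProductSpace ℂ H] [CompleteSpace H]
    [FiniteDimensional ℂ H] {m : ℕ} (hm : Module.finrank ℂ H = m) (hm0 : 0 < m)
    {Ω : Type*} [MeasurableSpace Ω] (μ : Measure Ω)
    (x τ : Ω → H) (b : ℝ) (hb : 0 < b)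
    -- tightness: `S_{x,τ} = b·I = S_{τ,x}` weakly
    (hS : ∀ h u : H, (b : ℂ) * ⟪u, h⟫ = ∫ α, ⟪x α, h⟫ * ⟪u, τ α⟫ ∂μ)
    (hS' : ∀ h u : H, (b : ℂ) * ⟪u, h⟫ = ∫ α, ⟪τ α, h⟫ * ⟪u, x α⟫ ∂μ)
    (hint : ∀ u v : H, Integrable (fun α => (⟪x α, u⟫ : ℂ) * ⟪v, τ α⟫) μ)
    (hd : Integrable (fun α => (⟪τ α, x α⟫ : ℂ)) μ) :
    (∫ α, ∫ β, ⟪x β, τ α⟫ * ⟪x α, τ β⟫ ∂μ ∂μ =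
      (1 / (m : ℂ)) * (∫ α, ⟪τ α, x α⟫ ∂μ) ^ 2) ∧
    (∫ α, ∫ β, ⟪x β, τ α⟫ * ⟪x α, τ β⟫ ∂μ ∂μ =
      ∫ α, ∫ β, ⟪τ β, τ α⟫ * ⟪x α, x β⟫ ∂μ ∂μ) :=
  extension_stmt15_general hm μ x τ b hS hS' hint
end

section
/- Suppose ({x_α}, {τ_α}) is a continuous frame for ℝ^m with bounds a, b such that ∫ ⟨h, x_α⟩⟨τ_α, g⟩ dμ(α) = ∫ ⟨g, x_α⟩⟨τ_α, h⟩ dμ(α) for all h, g ∈ ℝ^m. Then, viewing x_α, τ_α as vectors in ℂ^m, for every z ∈ ℂ^m one has a‖z‖² ≤ ∫ ⟨z, x_α⟩⟨τ_α, z⟩ dμ(α) ≤ b‖z‖²; in particular ({x_α}, {τ_α}) is a continuous frame for ℂ^m with the same bounds, and tightness/Parsevalness is preserved. -/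
/-! Write `z = u + i v` with `u, v` real. Since `x_α` and `τ_α` are real,
`∫ ⟨z, x_α⟩⟨τ_α, z⟩ dμ = B(u, u) + B(v, v) + i (B(v, u) - B(u, v))`, where `B` is the
real frame form `B(h, g) = ∫ ⟨h, x_α⟩⟨τ_α, g⟩ dμ`. Symmetry of `B` kills the imaginary part, and
since `‖z‖² = ‖u‖² + ‖v‖²` the real frame bounds for `u` and `v` add up to those for `z`. -/

open MeasureTheory
open scoped InnerProductSpace

namespace EuclideanSpace

variable {ι : Type*} [Fintype ι]

def ofReal (y : EuclideanSpace ℝ ι) : EuclideanSpace ℂ ι := WithLp.toLp 2 fun i => (y i : ℂ)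

def rePart (z : EuclideanSpace ℂ ι) : EuclideanSpace ℝ ι := WithLp.toLp 2 fun i => (z i).re

def imPart (z : EuclideanSpace ℂ ι) : EuclideanSpace ℝ ι := WithLp.toLp 2 fun i => (z i).im

theorem inner_ofReal_left (y : EuclideanSpace ℝ ι) (z : EuclideanSpace ℂ ι) :
    ⟪ofReal y, z⟫_ℂ = ⟪y, rePart z⟫_ℝ + ⟪y, imPart z⟫_ℝ * Complex.I := by
  simp only [PiLp.inner_apply, RCLike.inner_apply, ofReal, rePart, imPart, Complex.conj_ofReal,
    conj_trivial]
  push_cast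
  rw [Finset.sum_mul, ← Finset.sum_add_distrib]
  refine Finset.sum_congr rfl fun i _ => ?_
  conv_lhs => rw [← Complex.re_add_im (z i)]
  ring

theorem inner_ofReal_right (z : EuclideanSpace ℂ ι) (y : EuclideanSpace ℝ ι) :
    ⟪z, ofReal y⟫_ℂ = ⟪rePart z, y⟫_ℝ - ⟪imPart z, y⟫_ℝ * Complex.I := by
  rw [← inner_conj_symm, inner_ofReal_left, real_inner_comm y, real_inner_comm y]
  simp [Complex.conj_I, sub_eq_add_neg]

theorem norm_sq_eq_norm_sq_rePart_add_norm_sq_imPart (z : EuclideanSpace ℂ ι) :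
    ‖z‖ ^ 2 = ‖rePart z‖ ^ 2 + ‖imPart z‖ ^ 2 := by
  rw [EuclideanSpace.norm_sq_eq, EuclideanSpace.norm_sq_eq, EuclideanSpace.norm_sq_eq,
    ← Finset.sum_add_distrib]
  refine Finset.sum_congr rfl fun i _ => ?_
  simp only [rePart, imPart, Real.norm_eq_abs, sq_abs, Complex.sq_norm, Complex.normSq_apply]
  ring

end EuclideanSpace

open EuclideanSpace

section FrameForm

variable {Ω : Type*} [MeasurableSpace Ω] {E : Type*} [NormedAddCommGroup E] [InnerProductSpace ℝ E]

noncomputable def frameForm (μ : Measure Ω) (x τ : Ω → E) (h g : E) : ℝ :=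
  ∫ α, ⟪x α, h⟫_ℝ * ⟪g, τ α⟫_ℝ ∂μ

variable {ι : Type*} [Fintype ι]

theorem inner_ofReal_mul_inner_ofReal (y w : EuclideanSpace ℝ ι) (z : EuclideanSpace ℂ ι) :
    ⟪ofReal y, z⟫_ℂ * ⟪z, ofReal w⟫_ℂ =
      ((⟪y, rePart z⟫_ℝ * ⟪rePart z, w⟫_ℝ + ⟪y, imPart z⟫_ℝ * ⟪imPart z, w⟫_ℝ : ℝ) : ℂ) +
        ((⟪y, imPart z⟫_ℝ * ⟪rePart z, w⟫_ℝ - ⟪y, rePart z⟫_ℝ * ⟪imPart z, w⟫_ℝ : ℝ) : ℂ) *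
          Complex.I := by
  rw [inner_ofReal_left, inner_ofReal_right]
  push_cast
  ring_nf
  rw [Complex.I_sq]
  ring

theorem integral_inner_ofReal_mul_inner_ofReal {μ : Measure Ω} {x τ : Ω → EuclideanSpace ℝ ι}
    (hint : ∀ h g, Integrable (fun α => ⟪x α, h⟫_ℝ * ⟪g, τ α⟫_ℝ) μ) (z : EuclideanSpace ℂ ι) :
    ∫ α, ⟪ofReal (x α), z⟫_ℂ * ⟪z, ofReal (τ α)⟫_ℂ ∂μ =
      ((frameForm μ x τ (rePart z) (rePart z) + frameForm μ x τ (imPart z) (imPart z) : ℝ) : ℂ) +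
        ((frameForm μ x τ (imPart z) (rePart z) - frameForm μ x τ (rePart z) (imPart z) : ℝ) : ℂ) *
          Complex.I := by
  simp only [inner_ofReal_mul_inner_ofReal, frameForm]
  set u := rePart z
  set v := imPart z
  rw [integral_add ((hint u u).add (hint v v)).ofReal
      (((hint v u).sub (hint u v)).ofReal.mul_const _), integral_mul_const,
    integral_complex_ofReal, integral_complex_ofReal, integral_add (hint u u) (hint v v),
    integral_sub (hint v u) (hint u v)]

end FrameForm

theorem extension_stmt16_general
    {m : ℕ} {Ω : Type*} [MeasurableSpace Ω] (μ : Measure Ω)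
    (x τ : Ω → EuclideanSpace ℝ (Fin m))
    (a b : ℝ)
    (hint : ∀ h g : EuclideanSpace ℝ (Fin m),
      Integrable (fun α => inner (𝕜 := ℝ) (x α) h * inner (𝕜 := ℝ) g (τ α)) μ)
    -- frame bounds on ℝ^m: `a‖h‖² ≤ ∫ ⟨h,x_α⟩⟨τ_α,h⟩ dμ ≤ b‖h‖²`
    (hlow : ∀ h : EuclideanSpace ℝ (Fin m),
      a * ‖h‖ ^ 2 ≤ ∫ α, inner (𝕜 := ℝ) (x α) h * inner (𝕜 := ℝ) h (τ α) ∂μ)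
    (hup : ∀ h : EuclideanSpace ℝ (Fin m),
      ∫ α, inner (𝕜 := ℝ) (x α) h * inner (𝕜 := ℝ) h (τ α) ∂μ ≤ b * ‖h‖ ^ 2)
    -- symmetry: `∫ ⟨h,x_α⟩⟨τ_α,g⟩ dμ = ∫ ⟨g,x_α⟩⟨τ_α,h⟩ dμ`
    (hsym : ∀ h g : EuclideanSpace ℝ (Fin m),
      ∫ α, inner (𝕜 := ℝ) (x α) h * inner (𝕜 := ℝ) g (τ α) ∂μ =
        ∫ α, inner (𝕜 := ℝ) (x α) g * inner (𝕜 := ℝ) h (τ α) ∂μ)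
    -- the complexified families
    (xC τC : Ω → EuclideanSpace ℂ (Fin m))
    (hxC : ∀ (α : Ω) (i : Fin m), xC α i = ((x α i : ℝ) : ℂ))
    (hτC : ∀ (α : Ω) (i : Fin m), τC α i = ((τ α i : ℝ) : ℂ)) :
    ∀ z : EuclideanSpace ℂ (Fin m),
      a * ‖z‖ ^ 2 ≤ (∫ α, inner (𝕜 := ℂ) (xC α) z * inner (𝕜 := ℂ) z (τC α) ∂μ).re ∧
      (∫ α, inner (𝕜 := ℂ) (xC α) z * inner (𝕜 := ℂ) z (τC α) ∂μ).re ≤ b * ‖z‖ ^ 2 ∧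
      (∫ α, inner (𝕜 := ℂ) (xC α) z * inner (𝕜 := ℂ) z (τC α) ∂μ).im = 0 := by
  intro z
  obtain rfl : xC = fun α => ofReal (x α) := funext fun α => by ext i; exact hxC α i
  obtain rfl : τC = fun α => ofReal (τ α) := funext fun α => by ext i; exact hτC α i
  have hsym_re_im :
      frameForm μ x τ (imPart z) (rePart z) = frameForm μ x τ (rePart z) (imPart z) := hsym _ _
  have hlow' : ∀ h, a * ‖h‖ ^ 2 ≤ frameForm μ x τ h h := hlow
  have hup' : ∀ h, frameForm μ x τ h h ≤ b * ‖h‖ ^ 2 := hup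
  rw [integral_inner_ofReal_mul_inner_ofReal hint, hsym_re_im, sub_self,
    norm_sq_eq_norm_sq_rePart_add_norm_sq_imPart]
  simp only [Complex.ofReal_zero, zero_mul, add_zero, Complex.ofReal_re, Complex.ofReal_im]
  exact ⟨by linarith [hlow' (rePart z), hlow' (imPart z)],
    by linarith [hup' (rePart z), hup' (imPart z)], trivial⟩

/-- a continuous frame `({x_α},{τ_α})` for `ℝ^m` with bounds `a, b` whose
frame-type form is symmetric is, after complexification, a continuous frame for `ℂ^m` with
the same bounds: `a‖z‖² ≤ ∫ ⟨z, x_α⟩⟨τ_α, z⟩ dμ ≤ b‖z‖²` for all `z ∈ ℂ^m` (the integral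
being real), so tightness/Parsevalness is preserved.
(The paper's `⟨u,v⟩` is `⟪v, u⟫` in Mathlib's convention.) -/
theorem extension_stmt16
    {m : ℕ} {Ω : Type*} [MeasurableSpace Ω] (μ : Measure Ω)
    (x τ : Ω → EuclideanSpace ℝ (Fin m))
    (a b : ℝ) (ha : 0 < a) (hb : 0 < b)
    (hint : ∀ h g : EuclideanSpace ℝ (Fin m),
      Integrable (fun α => inner (𝕜 := ℝ) (x α) h * inner (𝕜 := ℝ) g (τ α)) μ)
    -- frame bounds on ℝ^m: `a‖h‖² ≤ ∫ ⟨h,x_α⟩⟨τ_α,h⟩ dμ ≤ b‖h‖²`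
    (hlow : ∀ h : EuclideanSpace ℝ (Fin m),
      a * ‖h‖ ^ 2 ≤ ∫ α, inner (𝕜 := ℝ) (x α) h * inner (𝕜 := ℝ) h (τ α) ∂μ)
    (hup : ∀ h : EuclideanSpace ℝ (Fin m),
      ∫ α, inner (𝕜 := ℝ) (x α) h * inner (𝕜 := ℝ) h (τ α) ∂μ ≤ b * ‖h‖ ^ 2)
    -- symmetry: `∫ ⟨h,x_α⟩⟨τ_α,g⟩ dμ = ∫ ⟨g,x_α⟩⟨τ_α,h⟩ dμ`
    (hsym : ∀ h g : EuclideanSpace ℝ (Fin m),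
      ∫ α, inner (𝕜 := ℝ) (x α) h * inner (𝕜 := ℝ) g (τ α) ∂μ =
        ∫ α, inner (𝕜 := ℝ) (x α) g * inner (𝕜 := ℝ) h (τ α) ∂μ)
    -- the complexified families
    (xC τC : Ω → EuclideanSpace ℂ (Fin m))
    (hxC : ∀ (α : Ω) (i : Fin m), xC α i = ((x α i : ℝ) : ℂ))
    (hτC : ∀ (α : Ω) (i : Fin m), τC α i = ((τ α i : ℝ) : ℂ)) :
    ∀ z : EuclideanSpace ℂ (Fin m),
      a * ‖z‖ ^ 2 ≤ (∫ α, inner (𝕜 := ℂ) (xC α) z * inner (𝕜 := ℂ) z (τC α) ∂μ).re ∧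
      (∫ α, inner (𝕜 := ℂ) (xC α) z * inner (𝕜 := ℂ) z (τC α) ∂μ).re ≤ b * ‖z‖ ^ 2 ∧
      (∫ α, inner (𝕜 := ℂ) (xC α) z * inner (𝕜 := ℂ) z (τC α) ∂μ).im = 0 :=
  extension_stmt16_general μ x τ a b hint hlow hup hsym xC τC hxC hτC
end

section
/- Let ({x_α},{τ_α}) and ({y_α},{ω_α}) be weak continuous frames for a Hilbert space H (frame operators S_{x,τ} and S_{y,ω} positive and invertible) that are orthogonal: ∫ ⟨h, x_α⟩ ω_α dμ(α) = 0 = ∫ ⟨h, τ_α⟩ y_α dμ(α) (weakly) for all h ∈ H. Then the family z_α := S_{x,τ}^{-1}x_α + S_{y,ω}^{-1}y_α, ρ_α := S_{x,τ}^{-1}τ_α + S_{y,ω}^{-1}ω_α is a weak continuous frame for H with frame operator S_{z,ρ} = S_{x,τ}^{-1} + S_{y,ω}^{-1}, and it is a common dual of both frames: ∫ ⟨h, x_α⟩ ρ_α dμ = ∫ ⟨h, τ_α⟩ z_α dμ = h and ∫ ⟨h, y_α⟩ ρ_α dμ = ∫ ⟨h, ω_α⟩ z_α dμ = h for all h ∈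 H. -/
open MeasureTheory ContinuousLinearMap

variable {𝕜 : Type*} [RCLike 𝕜]

local notation "⟪" x ", " y "⟫" => @inner 𝕜 _ _ x y

/-! The inverses of the positive frame operators are positive, hence symmetric, so in every weak
pairing against `ρ_α = Sx⁻¹τ_α + Sy⁻¹ω_α` they move onto the test vector `u`: by orthogonality
`∫ ⟨h, x_α⟩ ⟨ρ_α, u⟩ = ⟨Sx h, Sx⁻¹ u⟩ + 0 = ⟨h, u⟩`, and likewise for the three other
duality relations. The frame operator of `(z, ρ)` then follows by linearity in `z` from the duality
of `ρ` with `x` and with `y`. Finally `Sx⁻¹ + Sy⁻¹` is invertible because `Sx⁻¹` is coercive,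
`‖v‖² ≤ ‖Sx‖ Re ⟨Sx⁻¹ v, v⟩`, by Cauchy–Schwarz for the semi-inner product `⟨Sx ·, ·⟩`. -/

open RCLike

namespace ContinuousLinearMap

variable {H : Type*} [NormedAddCommGroup H] [InnerProductSpace 𝕜 H] {S T : H →L[𝕜] H}

lemma apply_apply_of_comp_eq_id (hST : S.comp T = ContinuousLinearMap.id 𝕜 H) (v : H) :
    S (T v) = v := by
  simpa using congr($hST v)

lemma isPositive_of_comp_eq_id (hS : S.IsPositive) (hST : S.comp T = ContinuousLinearMap.id 𝕜 H) :
    T.IsPositive := by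
  have hST' := apply_apply_of_comp_eq_id hST
  refine ⟨fun u v => ?_, fun v => ?_⟩
  · calc ⟪T u, v⟫ = ⟪T u, S (T v)⟫ := by rw [hST']
      _ = ⟪S (T u), T v⟫ := (hS.inner_left_eq_inner_right _ _).symm
      _ = ⟪u, T v⟫ := by rw [hST']
  · simpa [reApplyInnerSelf, hST'] using hS.re_inner_nonneg_right (T v)

/-- Cauchy–Schwarz for the semi-inner product `⟪S ·, ·⟫`. -/
lemma IsPositive.norm_inner_mul_norm_inner_le (hS : S.IsPositive) (u v : H) :
    ‖⟪S u, v⟫‖ * ‖⟪S v, u⟫‖ ≤ re ⟪S u, u⟫ * re ⟪S v, v⟫ :=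
  letI core : PreInnerProductSpace.Core 𝕜 H :=
    { inner := fun a b => ⟪S a, b⟫
      conj_inner_symm := fun a b => by
        rw [inner_conj_symm, hS.inner_left_eq_inner_right]
      re_inner_nonneg := hS.re_inner_nonneg_left
      add_left := fun a b c => by simp [inner_add_left]
      smul_left := fun a b r => by simp [inner_smul_left] }
  InnerProductSpace.Core.inner_mul_inner_self_le (c := core) u v

lemma IsPositive.norm_apply_sq_le (hS : S.IsPositive) (w : H) :
    ‖S w‖ ^ 2 ≤ ‖S‖ * re ⟪S w, w⟫ := by
  have hcs := hS.norm_inner_mul_norm_inner_le w (S w)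
  rw [hS.inner_left_eq_inner_right (S w) w, inner_self_eq_norm_sq_to_K] at hcs
  have hSSw : re ⟪S (S w), S w⟫ ≤ ‖S‖ * ‖S w‖ ^ 2 :=
    calc re ⟪S (S w), S w⟫ ≤ ‖S (S w)‖ * ‖S w‖ := (re_le_norm _).trans (norm_inner_le_norm _ _)
      _ ≤ ‖S‖ * ‖S w‖ * ‖S w‖ := by gcongr; exact S.le_opNorm _
      _ = ‖S‖ * ‖S w‖ ^ 2 := by ring
  have hw := hS.re_inner_nonneg_left w
  simp only [norm_pow, norm_ofReal, abs_norm] at hcs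
  rcases (norm_nonneg (S w)).eq_or_lt with h0 | hpos
  · simpa [← h0] using mul_nonneg (norm_nonneg S) hw
  · refine le_of_mul_le_mul_right ?_ (pow_pos hpos 2)
    calc ‖S w‖ ^ 2 * ‖S w‖ ^ 2 ≤ re ⟪S w, w⟫ * (‖S‖ * ‖S w‖ ^ 2) :=
          hcs.trans (mul_le_mul_of_nonneg_left hSSw hw)
      _ = ‖S‖ * re ⟪S w, w⟫ * ‖S w‖ ^ 2 := by ring

lemma IsPositive.norm_sq_le_of_comp_eq_id (hS : S.IsPositive)
    (hST : S.comp T = ContinuousLinearMap.id 𝕜 H) (v : H) :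
    ‖v‖ ^ 2 ≤ ‖S‖ * re ⟪T v, v⟫ := by
  simpa [apply_apply_of_comp_eq_id hST, hS.inner_left_eq_inner_right, inner_re_symm (T v)] using
    hS.norm_apply_sq_le (T v)

open scoped NNReal in
lemma isUnit_add_of_comp_eq_id [CompleteSpace H] {B : H →L[𝕜] H} (hS : S.IsPositive)
    (hST : S.comp T = ContinuousLinearMap.id 𝕜 H) (hB : B.IsPositive) : IsUnit (T + B) := by
  have hTB := (isPositive_of_comp_eq_id hS hST).add hB
  refine isUnit_of_forall_le_norm_inner_map _ (c := (‖S‖₊ + 1)⁻¹) (by positivity) fun v => ?_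
  have hT_le : re ⟪T v, v⟫ ≤ re ⟪(T + B) v, v⟫ := by
    simpa [inner_add_left] using hB.re_inner_nonneg_left v
  have hv : ‖v‖ ^ 2 ≤ (‖S‖ + 1) * re ⟪(T + B) v, v⟫ := by
    nlinarith [hS.norm_sq_le_of_comp_eq_id hST v, norm_nonneg S, hTB.re_inner_nonneg_left v]
  rw [NNReal.coe_inv, NNReal.coe_add, coe_nnnorm, NNReal.coe_one, ← div_eq_mul_inv,
    div_le_iff₀ (by positivity)]
  exact hv.trans (by rw [mul_comm]; gcongr; exact re_le_norm _)

end ContinuousLinearMap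

section WeakPairing

open ComplexConjugate

variable {H : Type*} [NormedAddCommGroup H] [InnerProductSpace 𝕜 H]
  {Ω : Type*} [MeasurableSpace Ω] {μ : Measure Ω} {a b c d : Ω → H} {A B S T : H →L[𝕜] H}

variable (𝕜) (μ) in
/-- The paper's weak integral `∫ ⟨h, a_α⟩ b_α dμ(α)`, tested against `u`. -/
noncomputable def weakPairing (a b : Ω → H) (h u : H) : 𝕜 := ∫ α, ⟪a α, h⟫ * ⟪u, b α⟫ ∂μ

variable (𝕜) (μ) in
def PairingIntegrable (a b : Ω → H) : Prop :=
  ∀ h u : H, Integrable (fun α => ⟪a α, h⟫ * ⟪u, b α⟫) μ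

variable (μ) in
def IsWeakFrameOperator (a b : Ω → H) (S : H →L[𝕜] H) : Prop :=
  ∀ h u : H, ⟪u, S h⟫ = weakPairing 𝕜 μ a b h u

lemma conj_inner_mul_inner (a b h u : H) :
    conj (⟪a, h⟫ * ⟪u, b⟫) = ⟪b, u⟫ * ⟪h, a⟫ := by
  rw [map_mul, inner_conj_symm, inner_conj_symm, mul_comm]

lemma weakPairing_swap (a b : Ω → H) (h u : H) :
    weakPairing 𝕜 μ b a u h = conj (weakPairing 𝕜 μ a b h u) := by
  simp only [weakPairing, ← integral_conj, conj_inner_mul_inner]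

lemma weakPairing_swap_eq_zero (h0 : ∀ h u, weakPairing 𝕜 μ a b h u = 0) (h u : H) :
    weakPairing 𝕜 μ b a h u = 0 := by
  rw [weakPairing_swap, h0, map_zero]

lemma PairingIntegrable.swap (hab : PairingIntegrable 𝕜 μ a b) : PairingIntegrable 𝕜 μ b a :=
  fun h u => by
    simpa only [ContinuousLinearEquiv.coe_coe, conjCLE_apply, conj_inner_mul_inner] using
      (RCLike.conjCLE (K := 𝕜)).toContinuousLinearMap.integrable_comp (hab u h)

lemma inner_map_add_map (hA : A.IsSymmetric) (hB : B.IsSymmetric) (u b c : H) :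
    ⟪u, A b + B c⟫ = ⟪A u, b⟫ + ⟪B u, c⟫ := by
  rw [inner_add_right]
  congr 1
  exacts [(hA _ _).symm, (hB _ _).symm]

lemma PairingIntegrable.map_add_right (hA : A.IsSymmetric) (hB : B.IsSymmetric)
    (hab : PairingIntegrable 𝕜 μ a b) (hac : PairingIntegrable 𝕜 μ a c) :
    PairingIntegrable 𝕜 μ a (fun α => A (b α) + B (c α)) := fun h u => by
  simpa only [inner_map_add_map hA hB, mul_add, Pi.add_def] using (hab h (A u)).add (hac h (B u))

lemma weakPairing_map_add_right (hA : A.IsSymmetric) (hB : B.IsSymmetric)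
    (hab : PairingIntegrable 𝕜 μ a b) (hac : PairingIntegrable 𝕜 μ a c) (h u : H) :
    weakPairing 𝕜 μ a (fun α => A (b α) + B (c α)) h u =
      weakPairing 𝕜 μ a b h (A u) + weakPairing 𝕜 μ a c h (B u) := by
  simp only [weakPairing, inner_map_add_map hA hB, mul_add]
  exact integral_add (hab h (A u)) (hac h (B u))

lemma weakPairing_map_add_left (hA : A.IsSymmetric) (hB : B.IsSymmetric)
    (hac : PairingIntegrable 𝕜 μ a c) (hbc : PairingIntegrable 𝕜 μ b c) (h u : H) :
    weakPairing 𝕜 μ (fun α => A (a α) + B (b α)) c h u =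
      weakPairing 𝕜 μ a c (A h) u + weakPairing 𝕜 μ b c (B h) u := by
  rw [weakPairing_swap, weakPairing_map_add_right hA hB hac.swap hbc.swap, map_add,
    ← weakPairing_swap, ← weakPairing_swap]

lemma IsWeakFrameOperator.weakPairing_comp_eq_inner (hS : IsWeakFrameOperator μ a b S)
    (hS_symm : S.IsSymmetric) (hST : S.comp T = ContinuousLinearMap.id 𝕜 H) (h u : H) :
    weakPairing 𝕜 μ a b h (T u) = ⟪u, h⟫ := by
  calc weakPairing 𝕜 μ a b h (T u) = ⟪T u, S h⟫ := (hS h (T u)).symm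
    _ = ⟪S (T u), h⟫ := (hS_symm _ _).symm
    _ = ⟪u, h⟫ := by rw [apply_apply_of_comp_eq_id hST]

lemma weakPairing_dual_of_orthogonal_left (hS : IsWeakFrameOperator μ a b S)
    (hS_symm : S.IsSymmetric) (hST : S.comp T = ContinuousLinearMap.id 𝕜 H)
    (hT : T.IsSymmetric) (hB : B.IsSymmetric) (hab : PairingIntegrable 𝕜 μ a b)
    (had : PairingIntegrable 𝕜 μ a d) (hd : ∀ h u, weakPairing 𝕜 μ a d h u = 0) (h u : H) :
    weakPairing 𝕜 μ a (fun α => T (b α) + B (d α)) h u = ⟪u, h⟫ := by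
  rw [weakPairing_map_add_right hT hB hab had, hd, add_zero,
    hS.weakPairing_comp_eq_inner hS_symm hST]

lemma weakPairing_dual_of_orthogonal_right (hS : IsWeakFrameOperator μ a b S)
    (hS_symm : S.IsSymmetric) (hST : S.comp T = ContinuousLinearMap.id 𝕜 H)
    (hT : T.IsSymmetric) (hB : B.IsSymmetric) (hab : PairingIntegrable 𝕜 μ a b)
    (had : PairingIntegrable 𝕜 μ a d) (hd : ∀ h u, weakPairing 𝕜 μ a d h u = 0) (h u : H) :
    weakPairing 𝕜 μ a (fun α => B (d α) + T (b α)) h u = ⟪u, h⟫ := by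
  rw [weakPairing_map_add_right hB hT had hab, hd, zero_add,
    hS.weakPairing_comp_eq_inner hS_symm hST]

lemma isWeakFrameOperator_map_add (hA : A.IsSymmetric) (hB : B.IsSymmetric)
    (hac : PairingIntegrable 𝕜 μ a c) (hbc : PairingIntegrable 𝕜 μ b c)
    (ha : ∀ h u, weakPairing 𝕜 μ a c h u = ⟪u, h⟫) (hb : ∀ h u, weakPairing 𝕜 μ b c h u = ⟪u, h⟫) :
    IsWeakFrameOperator μ (fun α => A (a α) + B (b α)) c (A + B) := fun h u => by
  rw [weakPairing_map_add_left hA hB hac hbc, ha, hb, add_apply, inner_add_right]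

end WeakPairing

theorem extension_stmt18_general
    {H : Type*} [NormedAddCommGroup H] [InnerProductSpace 𝕜 H] [CompleteSpace H]
    {Ω : Type*} [MeasurableSpace Ω] (μ : Measure Ω)
    (x τ y ω : Ω → H)
    (Sx SxInv Sy SyInv : H →L[𝕜] H)
    (hSx : ∀ h u : H, ⟪u, Sx h⟫ = ∫ α, ⟪x α, h⟫ * ⟪u, τ α⟫ ∂μ)
    (hSx' : ∀ h u : H, ⟪u, Sx h⟫ = ∫ α, ⟪τ α, h⟫ * ⟪u, x α⟫ ∂μ)
    (hSy : ∀ h u : H, ⟪u, Sy h⟫ = ∫ α, ⟪y α, h⟫ * ⟪u, ω α⟫ ∂μ)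
    (hSy' : ∀ h u : H, ⟪u, Sy h⟫ = ∫ α, ⟪ω α, h⟫ * ⟪u, y α⟫ ∂μ)
    (hposx : Sx.IsPositive) (hposy : Sy.IsPositive)
    (hx1 : Sx.comp SxInv = ContinuousLinearMap.id 𝕜 H)
    (hy1 : Sy.comp SyInv = ContinuousLinearMap.id 𝕜 H)
    -- orthogonality (weakly): `∫ ⟨h,x_α⟩ω_α dμ = 0 = ∫ ⟨h,τ_α⟩y_α dμ`
    (ho1 : ∀ h u : H, ∫ α, ⟪x α, h⟫ * ⟪u, ω α⟫ ∂μ = (0 : 𝕜))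
    (ho2 : ∀ h u : H, ∫ α, ⟪τ α, h⟫ * ⟪u, y α⟫ ∂μ = (0 : 𝕜))
    -- integrability of all cross pairings
    (hi1 : ∀ u v : H, Integrable (fun α => (⟪x α, u⟫ : 𝕜) * ⟪v, τ α⟫) μ)
    (hi2 : ∀ u v : H, Integrable (fun α => (⟪x α, u⟫ : 𝕜) * ⟪v, ω α⟫) μ)
    (hi3 : ∀ u v : H, Integrable (fun α => (⟪y α, u⟫ : 𝕜) * ⟪v, τ α⟫) μ)
    (hi4 : ∀ u v : H, Integrable (fun α => (⟪y α, u⟫ : 𝕜) * ⟪v, ω α⟫) μ) :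
    -- `(z, ρ)` is a weak continuous frame with frame operator `Sx⁻¹ + Sy⁻¹` …
    ((SxInv + SyInv).IsPositive ∧ IsUnit (SxInv + SyInv) ∧
      ∀ h u : H, ⟪u, (SxInv + SyInv) h⟫ =
        ∫ α, ⟪SxInv (x α) + SyInv (y α), h⟫ * ⟪u, SxInv (τ α) + SyInv (ω α)⟫ ∂μ) ∧
    -- … and it is a common dual of both frames
    (∀ h u : H,
      (∫ α, ⟪x α, h⟫ * ⟪u, SxInv (τ α) + SyInv (ω α)⟫ ∂μ = ⟪u, h⟫) ∧
      (∫ α, ⟪τ α, h⟫ * ⟪u, SxInv (x α) + SyInv (y α)⟫ ∂μ = ⟪u, h⟫) ∧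
      (∫ α, ⟪y α, h⟫ * ⟪u, SxInv (τ α) + SyInv (ω α)⟫ ∂μ = ⟪u, h⟫) ∧
      (∫ α, ⟪ω α, h⟫ * ⟪u, SxInv (x α) + SyInv (y α)⟫ ∂μ = ⟪u, h⟫)) := by
  have hpx := isPositive_of_comp_eq_id hposx hx1
  have hpy := isPositive_of_comp_eq_id hposy hy1
  have dual_x : ∀ h u, weakPairing 𝕜 μ x (fun α => SxInv (τ α) + SyInv (ω α)) h u = ⟪u, h⟫ :=
    weakPairing_dual_of_orthogonal_left hSx hposx.isSymmetric hx1 hpx.isSymmetric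
      hpy.isSymmetric hi1 hi2 ho1
  have dual_y : ∀ h u, weakPairing 𝕜 μ y (fun α => SxInv (τ α) + SyInv (ω α)) h u = ⟪u, h⟫ :=
    weakPairing_dual_of_orthogonal_right hSy hposy.isSymmetric hy1 hpy.isSymmetric
      hpx.isSymmetric hi4 hi3 (weakPairing_swap_eq_zero ho2)
  refine ⟨⟨hpx.add hpy, isUnit_add_of_comp_eq_id hposx hx1 hpy,
    isWeakFrameOperator_map_add hpx.isSymmetric hpy.isSymmetric
      (.map_add_right hpx.isSymmetric hpy.isSymmetric hi1 hi2)
      (.map_add_right hpx.isSymmetric hpy.isSymmetric hi3 hi4) dual_x dual_y⟩,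
    fun h u => ⟨dual_x h u, ?_, dual_y h u, ?_⟩⟩
  · exact weakPairing_dual_of_orthogonal_left hSx' hposx.isSymmetric hx1 hpx.isSymmetric
      hpy.isSymmetric (PairingIntegrable.swap hi1) (PairingIntegrable.swap hi3) ho2 h u
  · exact weakPairing_dual_of_orthogonal_right hSy' hposy.isSymmetric hy1 hpy.isSymmetric
      hpx.isSymmetric (PairingIntegrable.swap hi4) (PairingIntegrable.swap hi2)
      (weakPairing_swap_eq_zero ho1) h u

/-- two orthogonal weak continuous frames `({x_α},{τ_α})` and `({y_α},{ω_α})`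
admit the common dual weak continuous frame `z_α = S_{x,τ}⁻¹x_α + S_{y,ω}⁻¹y_α`,
`ρ_α = S_{x,τ}⁻¹τ_α + S_{y,ω}⁻¹ω_α`, whose frame operator is `S_{x,τ}⁻¹ + S_{y,ω}⁻¹`.
(The paper's `⟨u,v⟩` is `⟪v, u⟫` in Mathlib's convention; all integrals are weak.) -/
theorem extension_stmt18
    {H : Type*} [NormedAddCommGroup H] [InnerProductSpace 𝕜 H] [CompleteSpace H]
    {Ω : Type*} [MeasurableSpace Ω] (μ : Measure Ω)
    (x τ y ω : Ω → H)
    (Sx SxInv Sy SyInv : H →L[𝕜] H)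
    (hSx : ∀ h u : H, ⟪u, Sx h⟫ = ∫ α, ⟪x α, h⟫ * ⟪u, τ α⟫ ∂μ)
    (hSx' : ∀ h u : H, ⟪u, Sx h⟫ = ∫ α, ⟪τ α, h⟫ * ⟪u, x α⟫ ∂μ)
    (hSy : ∀ h u : H, ⟪u, Sy h⟫ = ∫ α, ⟪y α, h⟫ * ⟪u, ω α⟫ ∂μ)
    (hSy' : ∀ h u : H, ⟪u, Sy h⟫ = ∫ α, ⟪ω α, h⟫ * ⟪u, y α⟫ ∂μ)
    (hposx : Sx.IsPositive) (hposy : Sy.IsPositive)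
    (hx1 : Sx.comp SxInv = ContinuousLinearMap.id 𝕜 H)
    (hx2 : SxInv.comp Sx = ContinuousLinearMap.id 𝕜 H)
    (hy1 : Sy.comp SyInv = ContinuousLinearMap.id 𝕜 H)
    (hy2 : SyInv.comp Sy = ContinuousLinearMap.id 𝕜 H)
    -- orthogonality (weakly): `∫ ⟨h,x_α⟩ω_α dμ = 0 = ∫ ⟨h,τ_α⟩y_α dμ`
    (ho1 : ∀ h u : H, ∫ α, ⟪x α, h⟫ * ⟪u, ω α⟫ ∂μ = (0 : 𝕜))
    (ho2 : ∀ h u : H, ∫ α, ⟪τ α, h⟫ * ⟪u, y α⟫ ∂μ = (0 : 𝕜))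
    -- integrability of all cross pairings
    (hi1 : ∀ u v : H, Integrable (fun α => (⟪x α, u⟫ : 𝕜) * ⟪v, τ α⟫) μ)
    (hi2 : ∀ u v : H, Integrable (fun α => (⟪x α, u⟫ : 𝕜) * ⟪v, ω α⟫) μ)
    (hi3 : ∀ u v : H, Integrable (fun α => (⟪y α, u⟫ : 𝕜) * ⟪v, τ α⟫) μ)
    (hi4 : ∀ u v : H, Integrable (fun α => (⟪y α, u⟫ : 𝕜) * ⟪v, ω α⟫) μ) :
    -- `(z, ρ)` is a weak continuous frame with frame operator `Sx⁻¹ + Sy⁻¹` …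
    ((SxInv + SyInv).IsPositive ∧ IsUnit (SxInv + SyInv) ∧
      ∀ h u : H, ⟪u, (SxInv + SyInv) h⟫ =
        ∫ α, ⟪SxInv (x α) + SyInv (y α), h⟫ * ⟪u, SxInv (τ α) + SyInv (ω α)⟫ ∂μ) ∧
    -- … and it is a common dual of both frames
    (∀ h u : H,
      (∫ α, ⟪x α, h⟫ * ⟪u, SxInv (τ α) + SyInv (ω α)⟫ ∂μ = ⟪u, h⟫) ∧
      (∫ α, ⟪τ α, h⟫ * ⟪u, SxInv (x α) + SyInv (y α)⟫ ∂μ = ⟪u, h⟫) ∧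
      (∫ α, ⟪y α, h⟫ * ⟪u, SxInv (τ α) + SyInv (ω α)⟫ ∂μ = ⟪u, h⟫) ∧
      (∫ α, ⟪ω α, h⟫ * ⟪u, SxInv (x α) + SyInv (y α)⟫ ∂μ = ⟪u, h⟫)) :=
  extension_stmt18_general μ x τ y ω Sx SxInv Sy SyInv hSx hSx' hSy hSy' hposx hposy hx1 hy1 ho1 ho2
    hi1 hi2 hi3 hi4
end

section
/- Let ({x_α},{τ_α}) and ({y_α},{ω_α}) be Parseval weak continuous frames for a Hilbert space H (S_{x,τ} = I = S_{y,ω}) which are orthogonal (∫ ⟨h,x_α⟩ω_α dμ = 0 = ∫ ⟨h,τ_α⟩y_α dμ weakly for all h). If A, B, C, D ∈ B(H) satisfy CA* + DB* = I_H, then ({A x_α + B y_α}, {C τ_α + D ω_α}) is a Parseval weak continuous frame: ∫ ⟨h, A x_α + B y_α⟩ (C τ_α + D ω_α) dμ(α) = h weakly for all h ∈ H. -/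
/-!
Moving `A, B, C, D` across the inner products, the frame form of the new pair splits into the four
cross forms of the old sequences, evaluated at `A* h, B* h` and `C* u, D* u`. Orthogonality kills
the two mixed ones and Parseval turns the others into
`⟪C* u, A* h⟫ + ⟪D* u, B* h⟫ = ⟪u, (C A* + D B*) h⟫ = ⟪u, h⟫`.
-/

open MeasureTheory ContinuousLinearMap

variable {𝕜 : Type*} [RCLike 𝕜]

local notation "⟪" x ", " y "⟫" => @inner 𝕜 _ _ x y

section WeakFrameForm

variable {H : Type*} [NormedAddCommGroup H] [InnerProductSpace 𝕜 H]
  {Ω : Type*} [MeasurableSpace Ω] (μ : Measure Ω)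

variable (𝕜) in
/-- `weakFrameForm 𝕜 μ x τ h u = ⟪u, S_{x,τ} h⟫`, where `S_{x,τ} h = ∫ ⟨h, x_α⟩ τ_α dμ`. -/
noncomputable def weakFrameForm (x τ : Ω → H) (h u : H) : 𝕜 :=
  ∫ α, ⟪x α, h⟫ * ⟪u, τ α⟫ ∂μ

theorem weakFrameForm_swap (x τ : Ω → H) (h u : H) :
    weakFrameForm 𝕜 μ x τ h u = starRingEnd 𝕜 (weakFrameForm 𝕜 μ τ x u h) := by
  rw [weakFrameForm, weakFrameForm, ← integral_conj]
  congr 1 with α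
  rw [map_mul, inner_conj_symm, inner_conj_symm, mul_comm]

variable [CompleteSpace H]

theorem inner_map_add_mul_inner_map_add (A B C D : H →L[𝕜] H) (x y τ ω h u : H) :
    ⟪A x + B y, h⟫ * ⟪u, C τ + D ω⟫ =
      ⟪x, adjoint A h⟫ * ⟪adjoint C u, τ⟫ + ⟪x, adjoint A h⟫ * ⟪adjoint D u, ω⟫ +
        ⟪y, adjoint B h⟫ * ⟪adjoint C u, τ⟫ + ⟪y, adjoint B h⟫ * ⟪adjoint D u, ω⟫ := by
  rw [inner_add_left, inner_add_right, ← adjoint_inner_right A, ← adjoint_inner_right B,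
    ← adjoint_inner_left C, ← adjoint_inner_left D]
  ring

theorem weakFrameForm_map_add_map (A B C D : H →L[𝕜] H) {x τ y ω : Ω → H}
    (hxτ : ∀ u v : H, Integrable (fun α => ⟪x α, u⟫ * ⟪v, τ α⟫) μ)
    (hxω : ∀ u v : H, Integrable (fun α => ⟪x α, u⟫ * ⟪v, ω α⟫) μ)
    (hyτ : ∀ u v : H, Integrable (fun α => ⟪y α, u⟫ * ⟪v, τ α⟫) μ)
    (hyω : ∀ u v : H, Integrable (fun α => ⟪y α, u⟫ * ⟪v, ω α⟫) μ) (h u : H) :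
    weakFrameForm 𝕜 μ (fun α => A (x α) + B (y α)) (fun α => C (τ α) + D (ω α)) h u =
      weakFrameForm 𝕜 μ x τ (adjoint A h) (adjoint C u) +
        weakFrameForm 𝕜 μ x ω (adjoint A h) (adjoint D u) +
        weakFrameForm 𝕜 μ y τ (adjoint B h) (adjoint C u) +
        weakFrameForm 𝕜 μ y ω (adjoint B h) (adjoint D u) := by
  simp only [weakFrameForm, inner_map_add_mul_inner_map_add]
  rw [integral_add, integral_add, integral_add]
  all_goals fun_prop

end WeakFrameForm

/-- The paper's `⟨u,v⟩` is `⟪v, u⟫` in Mathlib's convention. -/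
theorem extension_stmt19
    {H : Type*} [NormedAddCommGroup H] [InnerProductSpace 𝕜 H] [CompleteSpace H]
    {Ω : Type*} [MeasurableSpace Ω] (μ : Measure Ω)
    (x τ y ω : Ω → H)
    -- Parseval: `S_{x,τ} = I = S_{y,ω}` weakly
    (hPx : ∀ h u : H, ∫ α, ⟪x α, h⟫ * ⟪u, τ α⟫ ∂μ = ⟪u, h⟫)
    (hPy : ∀ h u : H, ∫ α, ⟪y α, h⟫ * ⟪u, ω α⟫ ∂μ = ⟪u, h⟫)
    -- orthogonality (weakly)
    (ho1 : ∀ h u : H, ∫ α, ⟪x α, h⟫ * ⟪u, ω α⟫ ∂μ = (0 : 𝕜))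
    (ho2 : ∀ h u : H, ∫ α, ⟪τ α, h⟫ * ⟪u, y α⟫ ∂μ = (0 : 𝕜))
    -- integrability of all cross pairings
    (hi1 : ∀ u v : H, Integrable (fun α => (⟪x α, u⟫ : 𝕜) * ⟪v, τ α⟫) μ)
    (hi2 : ∀ u v : H, Integrable (fun α => (⟪x α, u⟫ : 𝕜) * ⟪v, ω α⟫) μ)
    (hi3 : ∀ u v : H, Integrable (fun α => (⟪y α, u⟫ : 𝕜) * ⟪v, τ α⟫) μ)
    (hi4 : ∀ u v : H, Integrable (fun α => (⟪y α, u⟫ : 𝕜) * ⟪v, ω α⟫) μ)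
    (A B C D : H →L[𝕜] H)
    (hABCD : C.comp (adjoint A) + D.comp (adjoint B) = ContinuousLinearMap.id 𝕜 H) :
    ∀ h u : H,
      ∫ α, ⟪A (x α) + B (y α), h⟫ * ⟪u, C (τ α) + D (ω α)⟫ ∂μ = ⟪u, h⟫ := by
  intro h u
  calc weakFrameForm 𝕜 μ (fun α => A (x α) + B (y α)) (fun α => C (τ α) + D (ω α)) h u
      = ⟪adjoint C u, adjoint A h⟫ + 0 + starRingEnd 𝕜 0 + ⟪adjoint D u, adjoint B h⟫ := by
        rw [weakFrameForm_map_add_map μ A B C D hi1 hi2 hi3 hi4, weakFrameForm_swap μ y τ]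
        simp only [weakFrameForm, hPx, hPy, ho1, ho2]
    _ = ⟪u, (C.comp (adjoint A) + D.comp (adjoint B)) h⟫ := by
        simp only [adjoint_inner_left, map_zero, add_zero, add_apply, comp_apply, inner_add_right]
    _ = ⟪u, h⟫ := by rw [hABCD, id_apply]
end
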